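/- arXiv:2005.03570 — 5 statements merged into one kernel-verified Lean document; each statement's English description precedes it below -/
import Mathlib

section
/- Let f : [0,∞) → ℝ be measurable and essentially bounded. Then f(t) ≥ 0 for almost every t ≥ 0 if and only if ∫_0^∞ s^k e^{−λ s} f(s) ds ≥ 0 for every positive rational λ and every k ∈ ℕ (including k = 0). -/
open MeasureTheory Filter Set

/-! ### Auxiliary series computations (Poisson moments) -/

private lemma hasSum_S0 (x : ℝ) : HasSum (fun k : ℕ => x ^ k / k.factorial) (Real.exp x) := by
  rw [Real.exp_eq_exp_ℝ]
  exact NormedSpace.expSeries_div_hasSum_exp x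

private lemma hasSum_S1 (x : ℝ) :
    HasSum (fun k : ℕ => (k : ℝ) * (x ^ k / k.factorial)) (x * Real.exp x) := by
  have h1 : HasSum (fun k : ℕ => ((k + 1 : ℕ) : ℝ) * (x ^ (k + 1) / (k + 1).factorial))
      (x * Real.exp x) := by
    have h0 := (hasSum_S0 x).mul_left x
    have he : (fun k : ℕ => ((k + 1 : ℕ) : ℝ) * (x ^ (k + 1) / (k + 1).factorial))
        = fun k : ℕ => x * (x ^ k / k.factorial) := by
      funext k
      have hf : ((k + 1).factorial : ℝ) = (k + 1) * k.factorial := by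
        rw [Nat.factorial_succ]; push_cast; ring
      have hk : ((k:ℝ) + 1) ≠ 0 := by positivity
      have hkf : (k.factorial : ℝ) ≠ 0 := by positivity
      push_cast
      rw [hf]
      field_simp
      ring
    rw [he]
    exact h0
  have := (hasSum_nat_add_iff (f := fun k : ℕ => (k : ℝ) * (x ^ k / k.factorial)) 1).mp h1
  simpa using this

private lemma hasSum_S2 (x : ℝ) :
    HasSum (fun k : ℕ => (k : ℝ) * ((k : ℝ) - 1) * (x ^ k / k.factorial))
      (x ^ 2 * Real.exp x) := by
  have h1 : HasSum (fun k : ℕ => (((k + 1 : ℕ)) : ℝ) * (((k + 1 : ℕ) : ℝ) - 1)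
      * (x ^ (k + 1) / (k + 1).factorial)) (x ^ 2 * Real.exp x) := by
    have h0 := (hasSum_S1 x).mul_left x
    have he : (fun k : ℕ => (((k + 1 : ℕ)) : ℝ) * (((k + 1 : ℕ) : ℝ) - 1)
        * (x ^ (k + 1) / (k + 1).factorial))
        = fun k : ℕ => x * ((k : ℝ) * (x ^ k / k.factorial)) := by
      funext k
      have hf : ((k + 1).factorial : ℝ) = (k + 1) * k.factorial := by
        rw [Nat.factorial_succ]; push_cast; ring
      have hk : ((k:ℝ) + 1) ≠ 0 := by positivity
      have hkf : (k.factorial : ℝ) ≠ 0 := by positivity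
      push_cast
      rw [hf]
      field_simp
      ring
    rw [he]
    convert h0 using 1
    · rfl
    ring
  have := (hasSum_nat_add_iff
    (f := fun k : ℕ => (k : ℝ) * ((k : ℝ) - 1) * (x ^ k / k.factorial)) 1).mp h1
  simpa using this

private lemma hasSum_var (x : ℝ) :
    HasSum (fun k : ℕ => ((k : ℝ) - x) ^ 2 * (x ^ k / k.factorial)) (x * Real.exp x) := by
  have h := (hasSum_S2 x).add (((hasSum_S1 x).mul_left (1 - 2 * x)).add
    ((hasSum_S0 x).mul_left (x ^ 2)))
  have he : (fun k : ℕ => (k : ℝ) * ((k : ℝ) - 1) * (x ^ k / k.factorial)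
      + ((1 - 2 * x) * ((k : ℝ) * (x ^ k / k.factorial))
        + x ^ 2 * (x ^ k / k.factorial)))
      = fun k : ℕ => ((k : ℝ) - x) ^ 2 * (x ^ k / k.factorial) := by
    funext k; ring
  rw [he] at h
  convert h using 1
  ring

/-! ### Szász–Mirakjan type approximation -/

private lemma szasz_est (φ : ℝ → ℝ) (M : ℕ) (hM : ∀ t : ℝ, (M : ℝ) ≤ t → φ t = 0)
    (B : ℝ) (hB : ∀ t, |φ t| ≤ B)
    (s : ℝ) (hs : 0 < s) (ε δ : ℝ) (hε : 0 < ε) (hδ : 0 < δ)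
    (hcont : ∀ t : ℝ, |t - s| < δ → |φ t - φ s| ≤ ε)
    (n : ℕ) (hn : 1 ≤ n) :
    |(∑ k ∈ Finset.range (n * M + 1),
        φ (k / n) * ((n * s) ^ k / k.factorial * Real.exp (-(n * s)))) - φ s|
      ≤ ε + 2 * B * s / (n * δ ^ 2) := by
  have hn' : (0 : ℝ) < n := by exact_mod_cast hn
  have hB0 : 0 ≤ B := le_trans (abs_nonneg _) (hB 0)
  set x : ℝ := ↑n * s with hx
  have hxpos : 0 < x := by positivity
  set p : ℕ → ℝ := fun k : ℕ => x ^ k / k.factorial * Real.exp (-x) with hp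
  have hp_nonneg : ∀ k, 0 ≤ p k := fun k => by positivity
  have hp1 : HasSum p 1 := by
    have := (hasSum_S0 x).mul_right (Real.exp (-x))
    simpa [← Real.exp_add] using this
  have hvar : HasSum (fun k : ℕ => ((k : ℝ) - x) ^ 2 * p k) x := by
    have h := (hasSum_var x).mul_right (Real.exp (-x))
    have h2 : x * Real.exp x * Real.exp (-x) = x := by
      rw [mul_assoc, ← Real.exp_add]; simp
    rw [h2] at h
    convert h using 2 with k
    · rfl
    rw [mul_assoc]
  have hsummand : Summable (fun k : ℕ => φ (k / n) * p k) := by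
    refine Summable.of_norm_bounded (hp1.summable.mul_left B) fun k => ?_
    rw [Real.norm_eq_abs, abs_mul, abs_of_nonneg (hp_nonneg k)]
    exact mul_le_mul_of_nonneg_right (hB _) (hp_nonneg k)
  have hfin : (∑ k ∈ Finset.range (n * M + 1),
      φ (k / n) * ((n * s) ^ k / k.factorial * Real.exp (-(n * s))))
      = ∑' k : ℕ, φ (k / n) * p k := by
    refine (tsum_eq_sum fun k hk => ?_).symm
    have hk' : n * M + 1 ≤ k := by
      by_contra hlt
      exact hk (Finset.mem_range.mpr (by omega))
    have h1 : (M * n : ℕ) ≤ k := by rw [Nat.mul_comm]; omega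
    have h2 : (M : ℝ) * n ≤ k := by exact_mod_cast h1
    have : (M : ℝ) ≤ (k : ℝ) / n := by rw [le_div_iff₀ hn']; exact h2
    rw [hM _ this, zero_mul]
  rw [hfin]
  have hdiff : HasSum (fun k : ℕ => (φ (k / n) - φ s) * p k)
      ((∑' k : ℕ, φ (k / n) * p k) - φ s) := by
    have := hsummand.hasSum.sub (hp1.mul_left (φ s))
    simp only [mul_one] at this
    convert this using 2 with k
    · rfl
    ring
  set c : ℝ := 2 * B / (n * δ) ^ 2 with hc
  have hterm : ∀ k : ℕ, ‖(φ (k / n) - φ s) * p k‖ ≤ ε * p k + c * (((k : ℝ) - x) ^ 2 * p k) := by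
    intro k
    rw [Real.norm_eq_abs, abs_mul, abs_of_nonneg (hp_nonneg k)]
    rcases lt_or_ge |(k : ℝ) / n - s| δ with hlt | hge
    · have h1 := hcont _ hlt
      have h2 : 0 ≤ c * (((k : ℝ) - x) ^ 2 * p k) := by positivity
      nlinarith [hp_nonneg k, mul_le_mul_of_nonneg_right h1 (hp_nonneg k)]
    · have h2b : |φ (k / n) - φ s| ≤ 2 * B := by
        calc |φ ((k:ℝ) / n) - φ s| ≤ |φ ((k:ℝ) / n)| + |φ s| := abs_sub _ _
        _ ≤ 2 * B := by have := hB ((k:ℝ)/n); have := hB s; linarith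
      have hkx : ((n : ℝ) * δ) ^ 2 ≤ ((k : ℝ) - x) ^ 2 := by
        have e : (k : ℝ) - x = n * ((k : ℝ) / n - s) := by field_simp; rfl
        rw [e, mul_pow, mul_pow]
        have h3 : δ ^ 2 ≤ ((k : ℝ) / n - s) ^ 2 := by
          have := pow_le_pow_left₀ hδ.le hge 2
          rwa [sq_abs] at this
        exact mul_le_mul_of_nonneg_left h3 (by positivity)
      have key : 2 * B * p k ≤ c * (((k : ℝ) - x) ^ 2 * p k) := by
        rw [hc, div_mul_eq_mul_div, le_div_iff₀ (by positivity)]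
        have h5 := mul_le_mul_of_nonneg_left
          (mul_le_mul_of_nonneg_right hkx (hp_nonneg k)) (by linarith : (0:ℝ) ≤ 2 * B)
        nlinarith [h5]
      have h4 : |φ ((k:ℝ) / n) - φ s| * p k ≤ 2 * B * p k :=
        mul_le_mul_of_nonneg_right h2b (hp_nonneg k)
      have h6 : 0 ≤ ε * p k := mul_nonneg hε.le (hp_nonneg k)
      linarith
  have hbsum : HasSum (fun k : ℕ => ε * p k + c * (((k : ℝ) - x) ^ 2 * p k)) (ε + c * x) := by
    simpa using (hp1.mul_left ε).add (hvar.mul_left c)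
  have habs := tsum_of_norm_bounded hbsum hterm
  rw [hdiff.tsum_eq, Real.norm_eq_abs] at habs
  refine habs.trans (le_of_eq ?_)
  rw [hc, hx]
  field_simp

private lemma szasz_tendsto (φ : ℝ → ℝ) (hφc : Continuous φ)
    (M : ℕ) (hM : ∀ t : ℝ, (M : ℝ) ≤ t → φ t = 0)
    (B : ℝ) (hB : ∀ t, |φ t| ≤ B) (s : ℝ) (hs : 0 < s) :
    Tendsto (fun n : ℕ => ∑ k ∈ Finset.range (n * M + 1),
        φ (k / n) * ((n * s) ^ k / k.factorial * Real.exp (-(n * s))))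
      atTop (nhds (φ s)) := by
  have hB0 : 0 ≤ B := le_trans (abs_nonneg _) (hB 0)
  rw [Metric.tendsto_atTop]
  intro ε hε
  obtain ⟨δ, hδpos, hδ⟩ := Metric.continuousAt_iff.mp (hφc.continuousAt (x := s))
    (ε / 3) (by positivity)
  have hcont : ∀ t : ℝ, |t - s| < δ → |φ t - φ s| ≤ ε / 3 := by
    intro t ht
    have := hδ (show dist t s < δ by rwa [Real.dist_eq])
    rw [Real.dist_eq] at this
    exact this.le
  obtain ⟨N0, hN0⟩ := exists_nat_gt (2 * B * s / (ε / 3 * δ ^ 2))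
  refine ⟨max N0 1, fun n hn => ?_⟩
  have hn1 : 1 ≤ n := le_trans (le_max_right _ _) hn
  have hnN0 : (N0 : ℝ) ≤ n := by exact_mod_cast le_trans (le_max_left _ _) hn
  have est := szasz_est φ M hM B hB s hs (ε / 3) δ (by positivity) hδpos hcont n hn1
  have hn' : (0 : ℝ) < n := by exact_mod_cast hn1
  have htail : 2 * B * s / (n * δ ^ 2) < ε / 3 := by
    rw [div_lt_iff₀ (by positivity)]
    have h1 : 2 * B * s / (ε / 3 * δ ^ 2) < (n : ℝ) := lt_of_lt_of_le hN0 hnN0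
    rw [div_lt_iff₀ (by positivity)] at h1
    nlinarith
  rw [Real.dist_eq]
  calc |(∑ k ∈ Finset.range (n * M + 1),
        φ (k / n) * ((n * s) ^ k / k.factorial * Real.exp (-(n * s)))) - φ s|
      ≤ ε / 3 + 2 * B * s / (n * δ ^ 2) := est
    _ < ε / 3 + ε / 3 := by linarith
    _ < ε := by linarith

private lemma szasz_abs_le (φ : ℝ → ℝ) (M : ℕ) (B : ℝ) (hB : ∀ t, |φ t| ≤ B)
    (n : ℕ) (s : ℝ) (hs : 0 ≤ s) :
    |∑ k ∈ Finset.range (n * M + 1),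
        φ (k / n) * ((n * s) ^ k / k.factorial * Real.exp (-(n * s)))| ≤ B := by
  have hB0 : 0 ≤ B := le_trans (abs_nonneg _) (hB 0)
  set x : ℝ := ↑n * s with hx
  have hx0 : 0 ≤ x := by positivity
  have hp1 : HasSum (fun k : ℕ => x ^ k / k.factorial * Real.exp (-x)) 1 := by
    have := (hasSum_S0 x).mul_right (Real.exp (-x))
    simpa [← Real.exp_add] using this
  have hpn : ∀ k : ℕ, 0 ≤ x ^ k / k.factorial * Real.exp (-x) := fun k => by positivity
  calc |∑ k ∈ Finset.range (n * M + 1),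
        φ (k / n) * (x ^ k / k.factorial * Real.exp (-x))|
      ≤ ∑ k ∈ Finset.range (n * M + 1),
        |φ (k / n) * (x ^ k / k.factorial * Real.exp (-x))| :=
        Finset.abs_sum_le_sum_abs _ _
    _ ≤ ∑ k ∈ Finset.range (n * M + 1), B * (x ^ k / k.factorial * Real.exp (-x)) := by
        refine Finset.sum_le_sum fun k _ => ?_
        rw [abs_mul, abs_of_nonneg (hpn k)]
        exact mul_le_mul_of_nonneg_right (hB _) (hpn k)
    _ = B * ∑ k ∈ Finset.range (n * M + 1), x ^ k / k.factorial * Real.exp (-x) := by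
        rw [Finset.mul_sum]
    _ ≤ B * 1 := by
        refine mul_le_mul_of_nonneg_left ?_ hB0
        exact sum_le_hasSum _ (fun k _ => hpn k) hp1
    _ = B := mul_one B

/-! ### Integrability facts -/

private lemma integrableOn_pow_mul_exp (k : ℕ) {b : ℝ} (hb : 0 < b) :
    IntegrableOn (fun s : ℝ => s ^ k * Real.exp (-(b * s))) (Ioi 0) := by
  have h := integrableOn_rpow_mul_exp_neg_mul_rpow (p := 1) (s := (k : ℝ)) (b := b)
    (lt_of_lt_of_le neg_one_lt_zero (Nat.cast_nonneg k)) one_pos hb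
  refine h.congr_fun (fun x hx => ?_) measurableSet_Ioi
  beta_reduce
  rw [Real.rpow_one, Real.rpow_natCast]
  ring_nf

private lemma integrableOn_pow_mul_exp_mul (f : ℝ → ℝ) (hmeas : Measurable f) (C : ℝ)
    (hbdd : ∀ᵐ s ∂(volume.restrict (Ioi (0 : ℝ))), |f s| ≤ C)
    (k : ℕ) {b : ℝ} (hb : 0 < b) :
    IntegrableOn (fun s : ℝ => s ^ k * Real.exp (-(b * s)) * f s) (Ioi 0) := by
  refine Integrable.mono' (g := fun s : ℝ => |C| * (s ^ k * Real.exp (-(b * s))))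
    ((integrableOn_pow_mul_exp k hb).const_mul _) ?_ ?_
  · exact (((measurable_id.pow_const k).mul
      ((measurable_id.const_mul b).neg.exp)).mul hmeas).aestronglyMeasurable
  · filter_upwards [hbdd, ae_restrict_mem measurableSet_Ioi] with s hC hs
    have hs0 : (0 : ℝ) < s := hs
    rw [Real.norm_eq_abs, abs_mul, abs_mul, abs_of_nonneg (by positivity : (0:ℝ) ≤ s ^ k),
      abs_of_nonneg (Real.exp_pos _).le]
    have h1 : |f s| ≤ |C| := le_trans hC (le_abs_self C)
    have h2 : (0:ℝ) ≤ s ^ k * Real.exp (-(b * s)) := by positivity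
    nlinarith [abs_nonneg (f s)]

/-! ### Nonnegativity of the approximating integrals -/

private lemma integral_szasz_nonneg (f : ℝ → ℝ) (hmeas : Measurable f) (C : ℝ)
    (hbdd : ∀ᵐ s ∂(volume.restrict (Ioi (0 : ℝ))), |f s| ≤ C)
    (H : ∀ q : ℚ, 0 < q → ∀ k : ℕ,
      0 ≤ ∫ s in Ioi (0 : ℝ), s ^ k * Real.exp (-((q : ℝ) * s)) * f s)
    (φ : ℝ → ℝ) (hφ0 : ∀ t, 0 ≤ φ t) (M : ℕ) (n : ℕ) :
    0 ≤ ∫ s in Ioi (0 : ℝ), (∑ k ∈ Finset.range (n * M + 1),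
        φ (k / n) * ((n * s) ^ k / k.factorial * Real.exp (-(n * s))))
        * (Real.exp (-s) * f s) := by
  have hb : (0 : ℝ) < (n : ℝ) + 1 := by positivity
  have hrw : ∀ s : ℝ, (∑ k ∈ Finset.range (n * M + 1),
      φ (k / n) * ((n * s) ^ k / k.factorial * Real.exp (-(n * s))))
      * (Real.exp (-s) * f s)
      = ∑ k ∈ Finset.range (n * M + 1), (φ (k / n) * n ^ k / k.factorial)
        * (s ^ k * Real.exp (-(((n : ℝ) + 1) * s)) * f s) := by
    intro s
    rw [Finset.sum_mul]
    refine Finset.sum_congr rfl fun k _ => ?_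
    rw [show Real.exp (-(((n : ℝ) + 1) * s)) = Real.exp (-(↑n * s)) * Real.exp (-s) from by
      rw [← Real.exp_add]; congr 1; ring, mul_pow]
    ring
  simp only [hrw]
  rw [MeasureTheory.integral_finset_sum]
  · refine Finset.sum_nonneg fun k _ => ?_
    rw [integral_const_mul]
    refine mul_nonneg (div_nonneg (mul_nonneg (hφ0 _) (by positivity)) (Nat.cast_nonneg _)) ?_
    have h := H ((n : ℚ) + 1) (by positivity) k
    have hcast : (((n : ℚ) + 1 : ℚ) : ℝ) = (n : ℝ) + 1 := by push_cast; ring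
    rwa [hcast] at h
  · intro k _
    exact (integrableOn_pow_mul_exp_mul f hmeas C hbdd k hb).const_mul _

/-! ### Nonnegativity against continuous compactly supported test functions -/

private lemma test_nonneg (f : ℝ → ℝ) (hmeas : Measurable f) (C : ℝ)
    (hbdd : ∀ᵐ s ∂(volume.restrict (Ioi (0 : ℝ))), |f s| ≤ C)
    (H : ∀ q : ℚ, 0 < q → ∀ k : ℕ,
      0 ≤ ∫ s in Ioi (0 : ℝ), s ^ k * Real.exp (-((q : ℝ) * s)) * f s)
    (φ : ℝ → ℝ) (hφc : Continuous φ) (hφsupp : HasCompactSupport φ)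
    (hφ0 : ∀ t, 0 ≤ φ t) :
    0 ≤ ∫ s in Ioi (0 : ℝ), φ s * (Real.exp (-s) * f s) := by
  obtain ⟨t0, ht0⟩ := hφc.abs.exists_forall_ge_of_hasCompactSupport hφsupp.abs
  set B := |φ t0| with hBdef
  have hB : ∀ t, |φ t| ≤ B := ht0
  have hB0 : 0 ≤ B := abs_nonneg _
  obtain ⟨r, hr⟩ := (hφsupp.isBounded).subset_closedBall 0
  set M : ℕ := ⌈r⌉₊ + 1 with hMdef
  have hM : ∀ t : ℝ, (M : ℝ) ≤ t → φ t = 0 := by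
    intro t ht
    apply image_eq_zero_of_notMem_tsupport
    intro hmem
    have := hr hmem
    rw [Metric.mem_closedBall, Real.dist_eq, sub_zero] at this
    have h1 : r ≤ (⌈r⌉₊ : ℝ) := Nat.le_ceil r
    have h2 : (M : ℝ) = (⌈r⌉₊ : ℝ) + 1 := by rw [hMdef]; push_cast; ring
    have := le_trans (le_abs_self t) this
    linarith
  have key := MeasureTheory.tendsto_integral_of_dominated_convergence
    (F := fun (n : ℕ) (s : ℝ) => (∑ k ∈ Finset.range (n * M + 1),
        φ (k / n) * ((n * s) ^ k / k.factorial * Real.exp (-(n * s))))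
        * (Real.exp (-s) * f s))
    (f := fun s => φ s * (Real.exp (-s) * f s))
    (μ := volume.restrict (Ioi (0 : ℝ)))
    (bound := fun s => B * (Real.exp (-s) * |C|))
    (F_measurable := ?_) (bound_integrable := ?_) (h_bound := ?_) (h_lim := ?_)
  · exact ge_of_tendsto' key fun n =>
      integral_szasz_nonneg f hmeas C hbdd H φ hφ0 M n
  · intro n
    have hcont : Continuous fun s : ℝ => ∑ k ∈ Finset.range (n * M + 1),
        φ (k / n) * ((n * s) ^ k / k.factorial * Real.exp (-(n * s))) := by
      refine continuous_finset_sum _ fun k _ => ?_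
      fun_prop
    exact (hcont.measurable.mul
      ((measurable_neg.exp).mul hmeas)).aestronglyMeasurable
  · have : IntegrableOn (fun s : ℝ => Real.exp (-s)) (Ioi 0) := by
      have := exp_neg_integrableOn_Ioi 0 (b := 1) one_pos
      simpa using this
    exact ((this.mul_const |C|).const_mul B)
  · intro n
    filter_upwards [hbdd, ae_restrict_mem measurableSet_Ioi] with s hC hs
    have hs0 : (0 : ℝ) < s := hs
    rw [Real.norm_eq_abs, abs_mul, abs_mul, abs_of_nonneg (Real.exp_pos (-s)).le]
    have h1 := szasz_abs_le φ M B hB n s hs0.le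
    have h2 : Real.exp (-s) * |f s| ≤ Real.exp (-s) * |C| :=
      mul_le_mul_of_nonneg_left (le_trans hC (le_abs_self C)) (Real.exp_pos _).le
    have h3 : 0 ≤ Real.exp (-s) * |f s| := by positivity
    nlinarith [abs_nonneg (∑ k ∈ Finset.range (n * M + 1),
        φ (k / n) * ((n * s) ^ k / k.factorial * Real.exp (-(n * s))))]
  · filter_upwards [ae_restrict_mem measurableSet_Ioi] with s hs
    exact (szasz_tendsto φ hφc M hM B hB s hs).mul_const _

/-- clamping to `[0,1]` does not increase the distance to a point of `[0,1]`. -/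
private lemma clamp_le (a b : ℝ) (h0 : 0 ≤ b) (h1 : b ≤ 1) :
    |b - max 0 (min a 1)| ≤ |b - a| := by
  rcases le_total a 0 with h | h
  · rw [min_eq_left (h.trans zero_le_one), max_eq_left h, sub_zero,
      abs_of_nonneg h0, abs_of_nonneg (by linarith)]
    linarith
  · rcases le_total a 1 with h' | h'
    · rw [min_eq_left h', max_eq_right h]
    · rw [min_eq_right h', max_eq_right zero_le_one,
        abs_of_nonpos (by linarith), abs_of_nonpos (by linarith)]
      linarith

/-- A measurable, essentially bounded `f : [0,∞) → ℝ` is nonnegative a.e. if and only if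
all the integrals `∫_0^∞ s^k e^{-λ s} f(s) ds` are nonnegative for rational `λ > 0`
and every `k ∈ ℕ`. -/
theorem ae_nonneg_iff_laplace_derivatives_nonneg
    (f : ℝ → ℝ) (hmeas : Measurable f)
    (C : ℝ) (hbdd : ∀ᵐ s ∂(volume.restrict (Ici (0 : ℝ))), |f s| ≤ C) :
    (∀ᵐ s ∂(volume.restrict (Ici (0 : ℝ))), 0 ≤ f s) ↔
      (∀ q : ℚ, 0 < q → ∀ k : ℕ,
        0 ≤ ∫ s in Ioi (0 : ℝ), s ^ k * Real.exp (-((q : ℝ) * s)) * f s) := by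
  have hIoi : volume.restrict (Ioi (0 : ℝ)) = volume.restrict (Ici (0 : ℝ)) :=
    restrict_Ioi_eq_restrict_Ici
  have hbdd' : ∀ᵐ s ∂(volume.restrict (Ioi (0 : ℝ))), |f s| ≤ C := by rw [hIoi]; exact hbdd
  constructor
  · -- easy direction
    intro h q hq k
    have h' : ∀ᵐ s ∂(volume.restrict (Ioi (0 : ℝ))), 0 ≤ f s := by rw [hIoi]; exact h
    refine integral_nonneg_of_ae ?_
    filter_upwards [h', ae_restrict_mem measurableSet_Ioi] with s h1 h2
    have h2' : (0 : ℝ) < s := h2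
    have : (0:ℝ) ≤ s ^ k * Real.exp (-((q : ℝ) * s)) := by positivity
    exact mul_nonneg this h1
  · -- hard direction
    intro H
    set g : ℝ → ℝ := fun s => Real.exp (-s) * f s with hgdef
    have hg_meas : AEStronglyMeasurable g (volume.restrict (Ioi (0 : ℝ))) :=
      ((measurable_neg.exp).mul hmeas).aestronglyMeasurable
    have hexp_int : IntegrableOn (fun s : ℝ => Real.exp (-s)) (Ioi 0) := by
      have := exp_neg_integrableOn_Ioi 0 (b := 1) one_pos
      simpa using this
    have hg_int : Integrable g (volume.restrict (Ioi (0 : ℝ))) := by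
      refine Integrable.mono' (hexp_int.const_mul |C|) hg_meas ?_
      filter_upwards [hbdd'] with s hC
      rw [hgdef, Real.norm_eq_abs, abs_mul, abs_of_nonneg (Real.exp_pos (-s)).le]
      calc Real.exp (-s) * |f s| ≤ Real.exp (-s) * |C| :=
            mul_le_mul_of_nonneg_left (le_trans hC (le_abs_self C)) (Real.exp_pos _).le
        _ = |C| * Real.exp (-s) := mul_comm _ _
    have hg0 : 0 ≤ᵐ[volume.restrict (Ioi (0 : ℝ))] g := by
      refine ae_nonneg_of_forall_setIntegral_nonneg hg_int ?_
      intro A hA hAfin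
      rw [Measure.restrict_restrict hA]
      set Bs : Set ℝ := A ∩ Ioi 0 with hBs
      have hBmeas : MeasurableSet Bs := hA.inter measurableSet_Ioi
      have hBfin : volume Bs < ⊤ := by
        rw [Measure.restrict_apply hA] at hAfin
        exact hAfin
      set ι : ℝ → ℝ := Bs.indicator fun _ => (1 : ℝ) with hιdef
      have hι_int : Integrable ι volume := by
        rw [hιdef, integrable_indicator_iff hBmeas]
        exact integrableOn_const (C := (1:ℝ)) hBfin.ne
      have hι_meas : AEStronglyMeasurable ι (volume.restrict (Ioi (0:ℝ))) :=
        hι_int.aestronglyMeasurable.restrict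
      have hι01 : ∀ x, 0 ≤ ι x ∧ ι x ≤ 1 := by
        intro x
        rw [hιdef]
        by_cases hx : x ∈ Bs <;> simp [hx]
      -- express the set integral through `ι`
      have hset_eq : ∫ x in Bs, g x = ∫ x in Ioi (0:ℝ), ι x * g x := by
        have : ∀ x, ι x * g x = Bs.indicator g x := by
          intro x
          rw [hιdef]
          by_cases hx : x ∈ Bs <;> simp [hx]
        simp only [this]
        rw [setIntegral_indicator hBmeas]
        have hsub : Ioi (0:ℝ) ∩ Bs = Bs := inter_eq_right.mpr (by rw [hBs]; exact inter_subset_right)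
        rw [hsub]
      rw [hset_eq]
      -- ε-approximation argument
      refine le_of_forall_pos_le_add fun ε hε => ?_
      obtain ⟨ψ, hψsupp, hψdist, hψcont, hψint⟩ :=
        hι_int.exists_hasCompactSupport_integral_sub_le
          (show (0:ℝ) < ε / (|C| + 1) by positivity)
      set ψ' : ℝ → ℝ := fun x => max 0 (min (ψ x) 1) with hψ'def
      have hψ'c : Continuous ψ' := continuous_const.max (hψcont.min continuous_const)
      have hψ'supp : HasCompactSupport ψ' := by
        have := hψsupp.comp_left (g := fun y : ℝ => max 0 (min y 1)) (by norm_num)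
        simpa [hψ'def, Function.comp_def] using this
      have hψ'0 : ∀ t, 0 ≤ ψ' t := fun t => le_max_left _ _
      have hψ'1 : ∀ t, ψ' t ≤ 1 := fun t => max_le (zero_le_one) (min_le_right _ _)
      have htest := test_nonneg f hmeas C hbdd' H ψ' hψ'c hψ'supp hψ'0
      -- integrability of the two products
      have hψ'g_int : Integrable (fun x => ψ' x * g x) (volume.restrict (Ioi (0:ℝ))) := by
        refine hg_int.bdd_mul hψ'c.aestronglyMeasurable.restrict (c := 1) (Eventually.of_forall fun x => ?_)
        rw [Real.norm_eq_abs, abs_of_nonneg (hψ'0 x)]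
        exact hψ'1 x
      have hιg_int : Integrable (fun x => ι x * g x) (volume.restrict (Ioi (0:ℝ))) := by
        refine hg_int.bdd_mul hι_meas (c := 1) (Eventually.of_forall fun x => ?_)
        rw [Real.norm_eq_abs, abs_of_nonneg (hι01 x).1]
        exact (hι01 x).2
      -- the error term
      have e1 : (fun x => ι x * g x - ψ' x * g x) = fun x => (ι x - ψ' x) * g x := by
        funext x; ring
      have heq : (∫ x in Ioi (0:ℝ), ι x * g x) - (∫ x in Ioi (0:ℝ), ψ' x * g x)
          = ∫ x in Ioi (0:ℝ), (ι x - ψ' x) * g x := by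
        rw [← integral_sub hιg_int hψ'g_int, e1]
      have hd_int : Integrable (fun x => (ι x - ψ' x) * g x)
          (volume.restrict (Ioi (0:ℝ))) := by
        rw [← e1]; exact hιg_int.sub hψ'g_int
      have herr : |∫ x in Ioi (0:ℝ), (ι x - ψ' x) * g x| ≤ ε := by
        have h1 := norm_integral_le_integral_norm (μ := volume.restrict (Ioi (0:ℝ)))
          (fun x => (ι x - ψ' x) * g x)
        rw [Real.norm_eq_abs] at h1
        have hdiff_int : Integrable (fun x => ι x - ψ x) volume := hι_int.sub hψint
        have h2 : ∫ x in Ioi (0:ℝ), ‖(ι x - ψ' x) * g x‖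
            ≤ ∫ x in Ioi (0:ℝ), |C| * |ι x - ψ x| := by
          refine integral_mono_ae hd_int.norm ?_ ?_
          · exact ((hdiff_int.abs.const_mul |C|)).restrict
          · filter_upwards [hbdd', ae_restrict_mem measurableSet_Ioi] with s hC hs
            have hs0 : (0:ℝ) < s := hs
            rw [Real.norm_eq_abs, abs_mul]
            have hgb : |g s| ≤ |C| := by
              rw [hgdef, abs_mul, abs_of_nonneg (Real.exp_pos (-s)).le]
              calc Real.exp (-s) * |f s| ≤ 1 * |C| := by
                    refine mul_le_mul ?_ (le_trans hC (le_abs_self C)) (abs_nonneg _)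
                      (by norm_num)
                    exact Real.exp_le_one_iff.mpr (by linarith)
                _ = |C| := one_mul _
            have hcl : |ι s - ψ' s| ≤ |ι s - ψ s| := by
              rw [hψ'def]
              exact clamp_le (ψ s) (ι s) (hι01 s).1 (hι01 s).2
            calc |ι s - ψ' s| * |g s| ≤ |ι s - ψ s| * |C| := by
                  refine mul_le_mul hcl hgb (abs_nonneg _) (abs_nonneg _)
              _ = |C| * |ι s - ψ s| := mul_comm _ _
        have h3 : ∫ x in Ioi (0:ℝ), |C| * |ι x - ψ x| ≤ ∫ x : ℝ, |C| * |ι x - ψ x| := by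
          refine setIntegral_le_integral ((hdiff_int.abs.const_mul |C|)) ?_
          filter_upwards with x
          positivity
        have h4 : ∫ x : ℝ, |C| * |ι x - ψ x| ≤ |C| * (ε / (|C| + 1)) := by
          rw [integral_const_mul]
          refine mul_le_mul_of_nonneg_left ?_ (abs_nonneg _)
          simpa [Real.norm_eq_abs] using hψdist
        have h5 : |C| * (ε / (|C| + 1)) ≤ ε := by
          rw [div_eq_mul_inv, ← mul_assoc]
          rw [show |C| * ε * (|C| + 1)⁻¹ = ε * (|C| / (|C| + 1)) by field_simp]
          have : |C| / (|C| + 1) ≤ 1 := by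
            rw [div_le_one (by positivity)]
            linarith [abs_nonneg C]
          nlinarith
        linarith
      have := abs_le.mp herr
      linarith [htest, heq, this.1]
    -- conclude
    rw [← hIoi]
    filter_upwards [hg0, ae_restrict_mem measurableSet_Ioi] with s h1 h2
    have h2' : (0:ℝ) < s := h2
    have he : (0:ℝ) < Real.exp (-s) := Real.exp_pos _
    by_contra hneg
    push_neg at hneg
    have : g s < 0 := by
      rw [hgdef]
      exact mul_neg_of_pos_of_neg he hneg
    simp only [Pi.zero_apply] at h1
    linarith
end

section
/- Let X be a real Banach space, f : [0,∞) → X strongly measurable and essentially bounded, and t > 0. Suppose f has a left approximate limit f(t−) ∈ X at t, i.e., (1/h)∫_{t−h}^{t} ‖f(s) − f(t−)‖ ds → 0 as h → 0+. Then lim_{k→∞} (1/k!) (k/t)^{k+1} ∫_0^t s^k e^{−(k/t) s} ( f(s) − f(t−) ) ds = 0 in the norm of X. -/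
open MeasureTheory Filter Set

lemma lap_hasDerivAt {k : ℕ} (hk : 1 ≤ k) (r : ℝ) (u : ℝ) :
    HasDerivAt (fun s : ℝ => s ^ k * Real.exp (-(r * s)))
      (((k : ℝ) * u ^ (k - 1) - r * u ^ k) * Real.exp (-(r * u))) u := by
  have h1 : HasDerivAt (fun s : ℝ => -(r * s)) (-r) u := by
    simpa using ((hasDerivAt_id u).const_mul r).fun_neg
  have h2 : HasDerivAt (fun s : ℝ => Real.exp (-(r * s))) (Real.exp (-(r * u)) * (-r)) u :=
    (Real.hasDerivAt_exp _).comp u h1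
  have h3 := (hasDerivAt_pow k u).fun_mul h2
  refine h3.congr_deriv ?_
  ring

lemma lap_deriv_nonneg {k : ℕ} (hk : 1 ≤ k) {r t u : ℝ} (hr : 0 ≤ r) (hu : 0 ≤ u)
    (hut : u ≤ t) (hrt : r * t ≤ (k : ℝ)) :
    0 ≤ ((k : ℝ) * u ^ (k - 1) - r * u ^ k) * Real.exp (-(r * u)) := by
  have hp : u ^ k = u ^ (k - 1) * u := by
    rw [← pow_succ, Nat.sub_add_cancel hk]
  have h1 : (k : ℝ) * u ^ (k - 1) - r * u ^ k = u ^ (k - 1) * ((k : ℝ) - r * u) := by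
    rw [hp]; ring
  rw [h1]
  have h2 : r * u ≤ (k : ℝ) := le_trans (by nlinarith) hrt
  have h3 := (Real.exp_pos (-(r * u))).le
  have h4 : (0:ℝ) ≤ u ^ (k-1) := by positivity
  exact mul_nonneg (mul_nonneg h4 (by linarith)) h3

lemma lap_monotoneOn {k : ℕ} (hk : 1 ≤ k) {r t : ℝ} (hr : 0 ≤ r) (ht : 0 ≤ t)
    (hrt : r * t ≤ (k : ℝ)) :
    MonotoneOn (fun s : ℝ => s ^ k * Real.exp (-(r * s))) (Icc 0 t) := by
  apply monotoneOn_of_deriv_nonneg (convex_Icc 0 t)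
  · exact (Continuous.continuousOn (by continuity))
  · intro x _
    exact (lap_hasDerivAt hk r x).differentiableAt.differentiableWithinAt
  · intro x hx
    rw [interior_Icc] at hx
    rw [(lap_hasDerivAt hk r x).deriv]
    exact lap_deriv_nonneg hk hr hx.1.le (hx.2.le) hrt
open MeasureTheory Filter Set

lemma near_est {φ : ℝ → ℝ} (hφm : Measurable φ) (hφ0 : ∀ s, 0 ≤ φ s) {D : ℝ}
    (hφD : ∀ s, φ s ≤ D)
    {K K' : ℝ → ℝ} (hK : ∀ u, HasDerivAt K (K' u) u) (hK'c : Continuous K')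
    {t δ ε : ℝ} (hδ : 0 < δ) (hδt : δ < t)
    (hK'0 : ∀ u ∈ Icc (t - δ) t, 0 ≤ K' u) (hKa : 0 ≤ K (t - δ)) (hε : 0 ≤ ε)
    (hF : ∀ h ∈ Ioc (0:ℝ) δ, ∫ s in Ioc (t - h) t, φ s ≤ ε * h) :
    ∫ s in Ioc (t - δ) t, K s * φ s ≤ ε * ∫ s in Ioc (t - δ) t, K s := by
  set a := t - δ with ha
  have hat : a < t := by simp [ha]; linarith
  have hta : t - a = δ := by simp [ha]
  have hKc : Continuous K := by
    rw [continuous_iff_continuousAt]; exact fun x => (hK x).continuousAt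
  have hD0 : 0 ≤ D := le_trans (hφ0 0) (hφD 0)
  set μ := volume.restrict (Ioc a t) with hμ
  haveI hfin : IsFiniteMeasure μ := by
    constructor; rw [hμ, Measure.restrict_apply_univ]; exact measure_Ioc_lt_top
  -- integrability of φ
  have hφint : Integrable φ μ := by
    apply Integrable.mono' (integrable_const D) hφm.aestronglyMeasurable
    exact Eventually.of_forall fun s => by
      rw [Real.norm_eq_abs, abs_of_nonneg (hφ0 s)]; exact hφD s
  -- primitive of K'
  set P : ℝ → ℝ := fun s => ∫ u in a..s, K' u with hP
  have hPK : ∀ s ∈ Ioc a t, K s = K a + P s := by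
    intro s hs
    have h1 : ∫ u in a..s, K' u = K s - K a :=
      intervalIntegral.integral_eq_sub_of_hasDerivAt (fun u _ => hK u)
        (hK'c.intervalIntegrable a s)
    rw [hP]; simp [h1]
  -- bound for K' on Icc a t
  obtain ⟨M, hM⟩ := (isCompact_Icc (a := a) (b := t)).exists_bound_of_continuousOn
    hK'c.continuousOn
  -- step: split the integral
  have hPc : Continuous P := intervalIntegral.continuous_primitive
    (fun a b => hK'c.intervalIntegrable a b) a
  obtain ⟨MP, hMP⟩ := (isCompact_Icc (a := a) (b := t)).exists_bound_of_continuousOn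
    hPc.continuousOn
  have hPφint : Integrable (fun s => P s * φ s) μ := by
    apply Integrable.mono' (integrable_const (MP * D))
      ((hPc.measurable.mul hφm).aestronglyMeasurable)
    rw [hμ]
    filter_upwards [ae_restrict_mem measurableSet_Ioc] with s hs
    rw [Real.norm_eq_abs, Pi.mul_apply, abs_mul, abs_of_nonneg (hφ0 s)]
    exact mul_le_mul (hMP s ⟨hs.1.le, hs.2⟩) (hφD s) (hφ0 s)
      (le_trans (abs_nonneg _) (hMP s ⟨hs.1.le, hs.2⟩))
  have hsplit : ∫ s in Ioc a t, K s * φ s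
      = (K a * ∫ s in Ioc a t, φ s) + ∫ s in Ioc a t, P s * φ s := by
    have h3 : ∫ s in Ioc a t, K s * φ s = ∫ s in Ioc a t, (K a * φ s + P s * φ s) := by
      apply setIntegral_congr_fun measurableSet_Ioc
      intro s hs
      show K s * φ s = K a * φ s + P s * φ s
      rw [hPK s hs]; ring
    rw [h3, integral_add (hφint.const_mul (K a)) hPφint, integral_const_mul]
  -- ‖K'‖ bound nonneg
  have hM0 : 0 ≤ M := le_trans (norm_nonneg _) (hM t ⟨hat.le, le_refl t⟩)
  -- double integrand
  set Φ : ℝ → ℝ → ℝ := fun s u => φ s * (Ioc a s).indicator K' u with hΦ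
  have hindm : (fun p : ℝ × ℝ => (Ioc a p.1).indicator K' p.2)
      = ({p : ℝ × ℝ | a < p.2 ∧ p.2 ≤ p.1}).indicator (fun p => K' p.2) := by
    ext p
    simp only [Set.indicator_apply, Set.mem_Ioc, Set.mem_setOf_eq]
  have hsetm : MeasurableSet {p : ℝ × ℝ | a < p.2 ∧ p.2 ≤ p.1} :=
    (measurableSet_lt measurable_const measurable_snd).inter
      (measurableSet_le measurable_snd measurable_fst)
  have hmeasΦ : Measurable (Function.uncurry Φ) := by
    apply (hφm.comp measurable_fst).mul
    show Measurable (fun p : ℝ × ℝ => (Ioc a p.1).indicator K' p.2)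
    rw [hindm]
    exact Measurable.indicator (hK'c.measurable.comp measurable_snd) hsetm
  have hprod : μ.prod μ = (volume.prod volume).restrict ((Ioc a t) ×ˢ (Ioc a t)) :=
    Measure.prod_restrict _ _
  have hΦint : Integrable (Function.uncurry Φ) (μ.prod μ) := by
    apply Integrable.mono' (integrable_const (D * M)) hmeasΦ.aestronglyMeasurable
    have hae : ∀ᵐ p ∂μ.prod μ, p ∈ (Ioc a t) ×ˢ (Ioc a t) := by
      rw [hprod]; exact ae_restrict_mem (measurableSet_Ioc.prod measurableSet_Ioc)
    filter_upwards [hae] with p hp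
    have hp2 : p.2 ∈ Icc a t := ⟨hp.2.1.le, hp.2.2⟩
    show ‖φ p.1 * (Ioc a p.1).indicator K' p.2‖ ≤ D * M
    rw [Real.norm_eq_abs, abs_mul, abs_of_nonneg (hφ0 p.1),
      ← Real.norm_eq_abs ((Ioc a p.1).indicator K' p.2)]
    apply mul_le_mul (hφD p.1) _ (norm_nonneg _) hD0
    calc ‖(Ioc a p.1).indicator K' p.2‖ ≤ ‖K' p.2‖ := norm_indicator_le_norm_self _ _
    _ ≤ M := hM p.2 hp2
  have hPs : ∀ s ∈ Ioc a t, (∫ u, Φ s u ∂μ) = P s * φ s := by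
    intro s hs
    have h1 : (∫ u, Φ s u ∂μ) = φ s * ∫ u in Ioc a t, (Ioc a s).indicator K' u := by
      rw [hμ]; exact integral_const_mul _ _
    rw [h1, setIntegral_indicator measurableSet_Ioc,
      inter_eq_self_of_subset_right (Ioc_subset_Ioc_right hs.2), mul_comm]
    congr 1
    rw [hP]
    exact (intervalIntegral.integral_of_le hs.1.le).symm
  have hT : ∫ s in Ioc a t, P s * φ s = ∫ u, (∫ s, Φ s u ∂μ) ∂μ := by
    have hT0 : ∫ s, (∫ u, Φ s u ∂μ) ∂μ = ∫ u, (∫ s, Φ s u ∂μ) ∂μ :=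
      integral_integral_swap hΦint
    rw [← hT0, hμ]
    refine setIntegral_congr_fun measurableSet_Ioc fun s hs => ?_
    exact (hPs s hs).symm
  have hmarg : Integrable (fun u => ∫ s, Φ s u ∂μ) μ := hΦint.integral_prod_right
  have hRint : Integrable (fun u => ε * (K' u * (t - u))) μ := by
    have : IntegrableOn (fun u => ε * (K' u * (t - u))) (Ioc a t) volume :=
      Continuous.integrableOn_Ioc (continuous_const.mul (hK'c.mul
        (continuous_const.sub continuous_id)))
    exact this
  have hkey : ∀ᵐ u ∂μ, (∫ s, Φ s u ∂μ) ≤ ε * (K' u * (t - u)) := by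
    rw [hμ]
    filter_upwards [ae_restrict_mem measurableSet_Ioc] with u hu
    have h1 : ∀ s, Φ s u = (Ici u).indicator (fun s => φ s * K' u) s := by
      intro s
      simp only [hΦ, Set.indicator_apply, Set.mem_Ioc, Set.mem_Ici]
      by_cases h : u ≤ s
      · simp [h, hu.1]
      · simp [h]
    have h2 : (∫ s, Φ s u ∂μ) = ∫ s in Ioc a t ∩ Ici u, φ s * K' u := by
      rw [hμ]
      rw [show (fun s => Φ s u) = fun s => (Ici u).indicator (fun s => φ s * K' u) s
        from funext h1]
      exact setIntegral_indicator measurableSet_Ici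
    have h3 : Ioc a t ∩ Ici u = Icc u t := by
      ext x
      constructor
      · rintro ⟨⟨_, hx2⟩, hx3⟩; exact ⟨hx3, hx2⟩
      · rintro ⟨hx1, hx2⟩; exact ⟨⟨lt_of_lt_of_le hu.1 hx1, hx2⟩, hx1⟩
    have h4 : (∫ s in Icc u t, φ s) ≤ ε * (t - u) := by
      rw [integral_Icc_eq_integral_Ioc]
      rcases lt_or_eq_of_le hu.2 with hut | hut
      · have h5 := hF (t - u) ⟨by linarith, by rw [ha] at hu; linarith [hu.1]⟩
        rw [sub_sub_cancel] at h5
        exact h5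
      · rw [hut]
        simp [Ioc_eq_empty (lt_irrefl t)]
    rw [h2, h3, integral_mul_const]
    calc (∫ s in Icc u t, φ s) * K' u ≤ (ε * (t - u)) * K' u :=
          mul_le_mul_of_nonneg_right h4 (hK'0 u ⟨hu.1.le, hu.2⟩)
    _ = ε * (K' u * (t - u)) := by ring
  have hTle : ∫ s in Ioc a t, P s * φ s ≤ ε * ∫ u in Ioc a t, K' u * (t - u) := by
    rw [hT]
    calc (∫ u, (∫ s, Φ s u ∂μ) ∂μ) ≤ ∫ u, ε * (K' u * (t - u)) ∂μ :=
          integral_mono_ae hmarg hRint hkey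
    _ = ε * ∫ u, K' u * (t - u) ∂μ := integral_const_mul _ _
    _ = ε * ∫ u in Ioc a t, K' u * (t - u) := by rw [hμ]
  -- integration by parts
  have hibp : ∫ u in Ioc a t, K' u * (t - u) = (∫ u in Ioc a t, K u) - K a * δ := by
    have h1 : ∀ u : ℝ, HasDerivAt (fun y => K y * (t - y)) (K' u * (t - u) - K u) u := by
      intro u
      have h := (hK u).fun_mul ((hasDerivAt_id u).const_sub t)
      simp only [id_eq] at h
      refine h.congr_deriv ?_
      ring
    have h4 : IntervalIntegrable (fun u => K' u * (t - u)) volume a t :=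
      (hK'c.mul (continuous_const.sub continuous_id)).intervalIntegrable a t
    have h5 : IntervalIntegrable K volume a t := hKc.intervalIntegrable a t
    have h3 := intervalIntegral.integral_eq_sub_of_hasDerivAt (fun u _ => h1 u) (h4.sub h5)
    rw [intervalIntegral.integral_sub h4 h5,
      intervalIntegral.integral_of_le hat.le, intervalIntegral.integral_of_le hat.le] at h3
    have hta' : t - a = δ := hta
    simp only [sub_self, mul_zero, zero_mul] at h3
    rw [hta'] at h3
    linarith
  -- conclude
  have hφδ : (∫ s in Ioc a t, φ s) ≤ ε * δ := by
    have := hF δ ⟨hδ, le_refl δ⟩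
    rw [← ha] at this
    exact this
  have hKaφ : K a * (∫ s in Ioc a t, φ s) ≤ K a * (ε * δ) :=
    mul_le_mul_of_nonneg_left hφδ hKa
  rw [hsplit]
  have := hTle
  rw [hibp] at this
  nlinarith [this, hKaφ]
open MeasureTheory Filter Set

lemma pow_self_le_factorial_mul_exp (k : ℕ) :
    (k:ℝ)^k ≤ (Nat.factorial k : ℝ) * Real.exp k := by
  have h1 : (k:ℝ)^k / (Nat.factorial k : ℝ) ≤ Real.exp k := by
    calc (k:ℝ)^k / (Nat.factorial k : ℝ)
        ≤ ∑ i ∈ Finset.range (k+1), (k:ℝ)^i / (Nat.factorial i : ℝ) :=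
          Finset.single_le_sum (f := fun i => (k:ℝ)^i / (Nat.factorial i : ℝ))
            (fun i _ => by positivity) (Finset.self_mem_range_succ k)
      _ ≤ Real.exp k := Real.sum_le_exp_of_nonneg (by positivity) _
  have h2 : (0:ℝ) < (Nat.factorial k : ℝ) := by
    exact_mod_cast Nat.factorial_pos k
  rw [div_le_iff₀ h2] at h1
  linarith

lemma q_exp_lt_one {q : ℝ} (hq0 : 0 < q) (hq1 : q < 1) : q * Real.exp (1 - q) < 1 := by
  have hlog : Real.log q < q - 1 := Real.log_lt_sub_one_of_pos hq0 (ne_of_lt hq1)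
  calc q * Real.exp (1 - q) = Real.exp (Real.log q + (1 - q)) := by
        rw [Real.exp_add, Real.exp_log hq0]
    _ < Real.exp 0 := Real.exp_lt_exp.mpr (by linarith)
    _ = 1 := Real.exp_zero

lemma integrable_K_Ioi (k : ℕ) {r : ℝ} (hr : 0 < r) :
    IntegrableOn (fun s : ℝ => s ^ k * Real.exp (-(r * s))) (Ioi 0) := by
  have h := integrableOn_rpow_mul_exp_neg_mul_rpow (p := 1) (s := (k:ℝ)) (b := r)
    (by have := Nat.cast_nonneg (α := ℝ) k; linarith) zero_lt_one hr
  apply h.congr_fun _ measurableSet_Ioi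
  intro x hx
  simp [Real.rpow_one, Real.rpow_natCast, neg_mul]

lemma integral_K_Ioi (k : ℕ) {r : ℝ} (hr : 0 < r) :
    ∫ s in Ioi (0:ℝ), s ^ k * Real.exp (-(r * s)) = (Nat.factorial k : ℝ) / r ^ (k+1) := by
  have h := Real.integral_rpow_mul_exp_neg_mul_Ioi (a := (k:ℝ)+1) (by positivity) hr
  have h2 : ∫ s in Ioi (0:ℝ), s ^ k * Real.exp (-(r * s))
      = ∫ s in Ioi (0:ℝ), s ^ ((k:ℝ)+1-1) * Real.exp (-(r * s)) := by
    refine setIntegral_congr_fun measurableSet_Ioi fun s hs => ?_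
    rw [add_sub_cancel_right, Real.rpow_natCast]
  rw [h2, h, Real.Gamma_nat_eq_factorial,
    show ((k:ℝ)+1) = ((k+1 : ℕ) : ℝ) by push_cast; ring, Real.rpow_natCast]
  rw [one_div, inv_pow]
  field_simp

/-- If `f : [0,∞) → X` is strongly measurable and essentially bounded with left
approximate limit `fm` at `t > 0`, then the contribution of `[0,t]` to the normalized
Laplace integrals of `f - fm` vanishes as `k → ∞`. -/
theorem laplace_left_contribution_vanishes
    {X : Type*} [NormedAddCommGroup X] [NormedSpace ℝ X] [CompleteSpace X]
    (f : ℝ → X)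
    (hmeas : AEStronglyMeasurable f (volume.restrict (Ici (0 : ℝ))))
    (C : ℝ) (hbdd : ∀ᵐ s ∂(volume.restrict (Ici (0 : ℝ))), ‖f s‖ ≤ C)
    (t : ℝ) (ht : 0 < t) (fm : X)
    (hleft : Tendsto (fun h : ℝ => (1 / h) * ∫ s in Ioc (t - h) t, ‖f s - fm‖)
      (nhdsWithin 0 (Ioi 0)) (nhds 0)) :
    Tendsto (fun k : ℕ =>
        ((1 / (Nat.factorial k : ℝ)) * ((k : ℝ) / t) ^ (k + 1)) •
          ∫ s in Ioc (0 : ℝ) t, (s ^ k * Real.exp (-(((k : ℝ) / t) * s))) • (f s - fm))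
      atTop (nhds 0) := by
  -- measurable representative and truncation
  set D := max C 0 + ‖fm‖ with hD
  have hD0 : 0 ≤ D := by positivity
  set f' := hmeas.mk f with hf'def
  have hf'm : StronglyMeasurable f' := hmeas.stronglyMeasurable_mk
  have hff' : f =ᵐ[volume.restrict (Ici (0:ℝ))] f' := hmeas.ae_eq_mk
  set φ : ℝ → ℝ := fun s => min ‖f' s - fm‖ D with hφdef
  have hφm : Measurable φ :=
    ((hf'm.sub stronglyMeasurable_const).norm.measurable).min measurable_const
  have hφ0 : ∀ s, 0 ≤ φ s := fun s => le_min (norm_nonneg _) hD0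
  have hφD : ∀ s, φ s ≤ D := fun s => min_le_right _ _
  have hφeq : ∀ᵐ s ∂(volume.restrict (Ici (0:ℝ))), φ s = ‖f s - fm‖ := by
    filter_upwards [hff', hbdd] with s h1 h2
    rw [hφdef]
    show min ‖f' s - fm‖ D = ‖f s - fm‖
    rw [← h1]
    apply min_eq_left
    calc ‖f s - fm‖ ≤ ‖f s‖ + ‖fm‖ := norm_sub_le _ _
      _ ≤ D := by rw [hD]; have := le_max_left C 0; linarith
  have hsub : ∀ {u : Set ℝ}, u ⊆ Ici (0:ℝ) →
      (∀ᵐ x ∂(volume.restrict u), φ x = ‖f x - fm‖) := by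
    intro u hu
    exact hφeq.filter_mono (ae_mono (Measure.restrict_mono hu le_rfl))
  rw [NormedAddCommGroup.tendsto_nhds_zero]
  intro ε hε
  -- choose δ from the approximate limit hypothesis
  obtain ⟨δ', hδ'0, hδ'⟩ := Metric.tendsto_nhdsWithin_nhds.mp hleft (ε/2) (by linarith)
  set δ := min (δ'/2) (t/2) with hδdef
  have hδ0 : 0 < δ := lt_min (by linarith) (by linarith)
  have hδt : δ < t := lt_of_le_of_lt (min_le_right _ _) (by linarith)
  set a := t - δ with hadef
  have ha0 : 0 < a := by rw [hadef]; linarith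
  have hat : a < t := by rw [hadef]; linarith
  have hF : ∀ h ∈ Ioc (0:ℝ) δ, ∫ s in Ioc (t - h) t, φ s ≤ (ε/2) * h := by
    intro h hh
    have hsub2 : Ioc (t - h) t ⊆ Ici (0:ℝ) := fun x hx =>
      le_trans (by linarith [hh.2] : (0:ℝ) ≤ t - h) hx.1.le
    have heq : ∫ s in Ioc (t - h) t, φ s = ∫ s in Ioc (t - h) t, ‖f s - fm‖ :=
      integral_congr_ae (hsub hsub2)
    have hd : dist h 0 < δ' := by
      rw [Real.dist_eq, sub_zero, abs_of_pos hh.1]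
      calc h ≤ δ := hh.2
        _ ≤ δ'/2 := min_le_left _ _
        _ < δ' := by linarith
    have hclose := hδ' (mem_Ioi.mpr hh.1) hd
    rw [Real.dist_eq, sub_zero] at hclose
    rw [heq]
    have hh0 := hh.1
    calc ∫ s in Ioc (t-h) t, ‖f s - fm‖
        = h * ((1/h) * ∫ s in Ioc (t-h) t, ‖f s - fm‖) := by field_simp
      _ ≤ h * |(1/h) * ∫ s in Ioc (t-h) t, ‖f s - fm‖| :=
          mul_le_mul_of_nonneg_left (le_abs_self _) hh0.le
      _ ≤ h * (ε/2) := mul_le_mul_of_nonneg_left hclose.le hh0.le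
      _ = (ε/2) * h := mul_comm _ _
  -- geometric decay of the far part
  set q := a / t with hqdef
  have hq0 : 0 < q := div_pos ha0 ht
  have hq1 : q < 1 := (div_lt_one ht).mpr hat
  set ρ := q * Real.exp (1 - q) with hρdef
  have hρ0 : 0 ≤ ρ := by positivity
  have hρ1 : ρ < 1 := q_exp_lt_one hq0 hq1
  have haq : a = q * t := by rw [hqdef]; field_simp
  have hfar : Tendsto (fun k : ℕ => D * t *
      ((1 / (Nat.factorial k : ℝ)) * ((k:ℝ)/t)^(k+1)
        * (a ^ k * Real.exp (-(((k:ℝ)/t) * a))))) atTop (nhds 0) := by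
    apply squeeze_zero (fun k => by positivity)
      (g := fun k : ℕ => D * ((k:ℝ) * ρ^k))
    · intro k
      have eL : D * t * ((1 / (Nat.factorial k : ℝ)) * ((k:ℝ)/t)^(k+1)
            * (a ^ k * Real.exp (-(((k:ℝ)/t) * a))))
          = D * ((k:ℝ)^(k+1) / (Nat.factorial k : ℝ))
            * (q^k * Real.exp (-((k:ℝ)*q))) := by
        rw [haq, div_pow, mul_pow,
          show ((k:ℝ)/t)*(q*t) = (k:ℝ)*q by field_simp]
        have htk : (0:ℝ) < t ^ (k+1) := by positivity
        field_simp
        ring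
      have eR : D * ((k:ℝ) * ρ^k)
          = D * ((k:ℝ) * Real.exp k) * (q^k * Real.exp (-((k:ℝ)*q))) := by
        rw [hρdef, mul_pow, ← Real.exp_nat_mul,
          show (k:ℝ)*(1-q) = (k:ℝ) + (-((k:ℝ)*q)) by ring, Real.exp_add]
        ring
      rw [eL, eR]
      apply mul_le_mul_of_nonneg_right _ (by positivity)
      apply mul_le_mul_of_nonneg_left _ hD0
      have hfk : (0:ℝ) < (Nat.factorial k : ℝ) := by exact_mod_cast Nat.factorial_pos k
      rw [div_le_iff₀ hfk]
      calc (k:ℝ)^(k+1) = (k:ℝ) * (k:ℝ)^k := by rw [pow_succ]; ring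
        _ ≤ (k:ℝ) * ((Nat.factorial k : ℝ) * Real.exp k) :=
            mul_le_mul_of_nonneg_left (pow_self_le_factorial_mul_exp k) (Nat.cast_nonneg k)
        _ = (k:ℝ) * Real.exp k * (Nat.factorial k : ℝ) := by ring
    · simpa using (tendsto_self_mul_const_pow_of_lt_one hρ0 hρ1).const_mul D
  filter_upwards [hfar.eventually_lt_const (show (0:ℝ) < ε/2 by linarith),
    eventually_ge_atTop 1] with k hkfar hk1
  -- notation for this k
  set r : ℝ := (k:ℝ)/t with hrdef
  have hk0 : (0:ℝ) < (k:ℝ) := by exact_mod_cast hk1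
  have hr0 : 0 < r := div_pos hk0 ht
  have hrt : r * t = (k:ℝ) := div_mul_cancel₀ _ (ne_of_gt ht)
  set c : ℝ := (1 / (Nat.factorial k : ℝ)) * r^(k+1) with hcdef
  have hc0 : 0 ≤ c := by positivity
  set K : ℝ → ℝ := fun s => s ^ k * Real.exp (-(r * s)) with hKdef
  have hKnn : ∀ s, 0 ≤ s → 0 ≤ K s := fun s hs => by rw [hKdef]; positivity
  have hKa0 : 0 ≤ K a := hKnn a ha0.le
  -- norm of the integral bounded by integral of K * φ
  rw [norm_smul, Real.norm_eq_abs, abs_of_nonneg hc0]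
  have h1 : ‖∫ s in Ioc (0:ℝ) t, K s • (f s - fm)‖ ≤ ∫ s in Ioc (0:ℝ) t, K s * φ s := by
    calc ‖∫ s in Ioc (0:ℝ) t, K s • (f s - fm)‖
        ≤ ∫ s in Ioc (0:ℝ) t, ‖K s • (f s - fm)‖ := norm_integral_le_integral_norm _
      _ = ∫ s in Ioc (0:ℝ) t, K s * φ s := by
          apply integral_congr_ae
          filter_upwards [hsub (fun x (hx : x ∈ Ioc (0:ℝ) t) => hx.1.le),
            ae_restrict_mem measurableSet_Ioc] with s hs1 hs2
          rw [norm_smul, Real.norm_eq_abs, abs_of_nonneg (hKnn s hs2.1.le), hs1]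
  -- integrability of K * φ
  have hKc : Continuous K := by
    rw [hKdef]; fun_prop
  have hKφint : IntegrableOn (fun x => K x * φ x) (Ioc 0 t) volume := by
    apply Integrable.mono' (integrable_const (t^k * D))
      ((hKc.measurable.mul hφm).aestronglyMeasurable)
    filter_upwards [ae_restrict_mem measurableSet_Ioc] with s hs
    rw [Real.norm_eq_abs, Pi.mul_apply, abs_mul, abs_of_nonneg (hKnn s hs.1.le), abs_of_nonneg (hφ0 s)]
    apply mul_le_mul _ (hφD s) (hφ0 s) (by positivity)
    calc K s ≤ s ^ k := by
          rw [hKdef]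
          apply mul_le_of_le_one_right (pow_nonneg hs.1.le k)
          rw [Real.exp_le_one_iff]
          have : 0 ≤ r * s := mul_nonneg hr0.le hs.1.le
          linarith
      _ ≤ t ^ k := pow_le_pow_left₀ hs.1.le hs.2 k
  -- split the integral
  have hsplit : ∫ s in Ioc (0:ℝ) t, K s * φ s
      = (∫ s in Ioc (0:ℝ) a, K s * φ s) + ∫ s in Ioc a t, K s * φ s := by
    rw [← Ioc_union_Ioc_eq_Ioc ha0.le hat.le,
      setIntegral_union (Ioc_disjoint_Ioc_of_le le_rfl) measurableSet_Ioc
        (hKφint.mono_set (Ioc_subset_Ioc_right hat.le))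
        (hKφint.mono_set (Ioc_subset_Ioc_left ha0.le))]
  -- far part bound
  have hmono := lap_monotoneOn hk1 hr0.le ht.le (le_of_eq hrt)
  have hfarb : ∫ s in Ioc (0:ℝ) a, K s * φ s ≤ K a * D * t := by
    calc ∫ s in Ioc (0:ℝ) a, K s * φ s ≤ ∫ _s in Ioc (0:ℝ) a, K a * D := by
          apply setIntegral_mono_on
            (hKφint.mono_set (Ioc_subset_Ioc_right hat.le))
            (integrableOn_const measure_Ioc_lt_top.ne) measurableSet_Ioc
          intro s hs
          exact mul_le_mul (hmono ⟨hs.1.le, hs.2.trans hat.le⟩ ⟨ha0.le, hat.le⟩ hs.2)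
            (hφD s) (hφ0 s) hKa0
      _ = (volume (Ioc (0:ℝ) a)).toReal * (K a * D) := by rw [setIntegral_const]; rfl
      _ ≤ t * (K a * D) := by
          apply mul_le_mul_of_nonneg_right _ (mul_nonneg hKa0 hD0)
          rw [Real.volume_Ioc, ENNReal.toReal_ofReal (by linarith)]
          linarith
      _ = K a * D * t := by ring
  -- near part bound
  have hK'c : Continuous (fun u : ℝ => ((k:ℝ) * u ^ (k-1) - r * u ^ k) * Real.exp (-(r*u))) := by
    fun_prop
  have hnear : ∫ s in Ioc a t, K s * φ s ≤ (ε/2) * ∫ s in Ioc a t, K s := by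
    rw [hadef]
    apply near_est hφm hφ0 hφD (lap_hasDerivAt hk1 r) hK'c hδ0 hδt
      _ (by rw [← hadef]; exact hKa0) (by linarith) hF
    intro u hu
    have ha0' : 0 < t - δ := by rw [← hadef]; exact ha0
    exact lap_deriv_nonneg hk1 hr0.le (by linarith [hu.1]) hu.2 (le_of_eq hrt)
  -- tail mass at most one
  have htail : c * ∫ s in Ioc a t, K s ≤ 1 := by
    have hmono2 : ∫ s in Ioc a t, K s ≤ ∫ s in Ioi (0:ℝ), K s := by
      apply setIntegral_mono_set (integrable_K_Ioi k hr0)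
      · filter_upwards [ae_restrict_mem measurableSet_Ioi] with s hs
        exact hKnn s (le_of_lt hs)
      · exact HasSubset.Subset.eventuallyLE (fun x hx => lt_of_lt_of_le ha0 hx.1.le)
    have hval : ∫ s in Ioi (0:ℝ), K s = (Nat.factorial k : ℝ) / r ^ (k+1) :=
      integral_K_Ioi k hr0
    calc c * ∫ s in Ioc a t, K s ≤ c * ((Nat.factorial k : ℝ) / r ^ (k+1)) :=
          mul_le_mul_of_nonneg_left (hmono2.trans_eq hval) hc0
      _ = 1 := by
          rw [hcdef]
          have hfk : (Nat.factorial k : ℝ) ≠ 0 := by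
            exact_mod_cast (Nat.factorial_pos k).ne'
          field_simp
  -- conclusion
  have hKint : IntegrableOn K (Ioc a t) volume :=
    (integrable_K_Ioi k hr0).mono_set (fun x hx => lt_of_lt_of_le ha0 hx.1.le)
  have hKpos : 0 ≤ ∫ s in Ioc a t, K s := by
    apply setIntegral_nonneg measurableSet_Ioc
    intro s hs
    exact hKnn s (le_trans ha0.le hs.1.le)
  have hfareq : c * (K a * D * t) = D * t * (c * (a^k * Real.exp (-(r*a)))) := by
    rw [hKdef]; ring
  have hfarlt : c * (K a * D * t) < ε/2 := by rw [hfareq]; exact hkfar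
  have htail2 : (ε/2) * (c * ∫ s in Ioc a t, K s) ≤ (ε/2) * 1 :=
    mul_le_mul_of_nonneg_left htail (by linarith)
  calc c * ‖∫ s in Ioc (0:ℝ) t, K s • (f s - fm)‖
      ≤ c * ((K a * D * t) + (ε/2) * ∫ s in Ioc a t, K s) := by
        apply mul_le_mul_of_nonneg_left _ hc0
        rw [hsplit] at h1
        exact h1.trans (add_le_add hfarb hnear)
    _ = c * (K a * D * t) + (ε/2) * (c * ∫ s in Ioc a t, K s) := by ring
    _ < ε := by linarith
end

section
/- Let X be a real Banach space, f : [0,∞) → X strongly measurable and essentially bounded, and t > 0. Suppose f has a right approximate limit f(t+) ∈ X at t, i.e., (1/h)∫_{t}^{t+h} ‖f(s) − f(t+)‖ ds → 0 as h → 0+. Then lim_{k→∞} (1/k!) (k/t)^{k+1} ∫_t^∞ s^k e^{−(k/t) s} ( f(s) − f(t+) ) ds = 0 in the norm of X. -/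
open MeasureTheory Filter Set

open scoped ENNReal

namespace LaplaceAux
open Real

lemma integ_pow_exp {b : ℝ} (hb : 0 < b) (k : ℕ) {u : ℝ} (hu : 0 ≤ u) :
    IntegrableOn (fun s : ℝ => s ^ k * Real.exp (-(b * s))) (Ioi u) := by
  have h0 : IntegrableOn (fun s : ℝ => s ^ (k:ℝ) * Real.exp (-b * s)) (Ioi 0) := by
    simpa using integrableOn_rpow_mul_exp_neg_mul_rpow (s := (k:ℝ)) (p := 1)
      (neg_one_lt_zero.trans_le (Nat.cast_nonneg k)) one_pos hb
  have h1 : IntegrableOn (fun s : ℝ => s ^ k * Real.exp (-(b * s))) (Ioi 0) := by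
    refine h0.congr_fun (fun x hx => ?_) measurableSet_Ioi
    beta_reduce
    rw [Real.rpow_natCast, neg_mul]
  exact h1.mono_set (Ioi_subset_Ioi hu)

lemma tendsto_pow_exp_zero {b : ℝ} (hb : 0 < b) (k : ℕ) :
    Tendsto (fun s : ℝ => s ^ k * Real.exp (-(b * s))) atTop (nhds 0) := by
  have h := (tendsto_pow_mul_exp_neg_atTop_nhds_zero k).comp
    (tendsto_id.const_mul_atTop hb)
  have h2 := h.const_mul ((1:ℝ)/b^k)
  rw [mul_zero] at h2
  refine h2.congr fun s => ?_
  simp only [Function.comp, id]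
  rw [mul_pow]
  field_simp

lemma hasDeriv_exp_lin (b s : ℝ) :
    HasDerivAt (fun s : ℝ => Real.exp (-(b * s))) (-b * Real.exp (-(b * s))) s := by
  have h1 : HasDerivAt (fun s : ℝ => -(b * s)) (-b) s := by
    exact ((hasDerivAt_id s).const_mul b).neg.congr_deriv (by ring)
  refine ((Real.hasDerivAt_exp (-(b * s))).comp s h1).congr_deriv ?_
  ring

lemma hasDeriv_K (b : ℝ) (k : ℕ) (s : ℝ) :
    HasDerivAt (fun s : ℝ => -(s ^ k * Real.exp (-(b * s))))
      ((b * s ^ k - k * s ^ (k - 1)) * Real.exp (-(b * s))) s := by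
  have h := ((hasDerivAt_pow k s).mul (hasDeriv_exp_lin b s)).neg
  refine h.congr_deriv ?_
  ring

lemma integ_w {b : ℝ} (hb : 0 < b) (k : ℕ) {u : ℝ} (hu : 0 ≤ u) :
    IntegrableOn (fun s : ℝ => (b * s ^ k - k * s ^ (k - 1)) * Real.exp (-(b * s))) (Ioi u) := by
  have h := ((integ_pow_exp hb k hu).const_mul b).sub ((integ_pow_exp hb (k-1) hu).const_mul k)
  refine IntegrableOn.congr_fun h (fun x _ => ?_) measurableSet_Ioi
  simp only [Pi.sub_apply]
  ring

lemma ftcA {b : ℝ} (hb : 0 < b) (k : ℕ) {u : ℝ} (hu : 0 ≤ u) :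
    ∫ s in Ioi u, (b * s ^ k - k * s ^ (k - 1)) * Real.exp (-(b * s))
      = u ^ k * Real.exp (-(b * u)) := by
  have h := integral_Ioi_of_hasDerivAt_of_tendsto'
    (f := fun s : ℝ => -(s ^ k * Real.exp (-(b * s))))
    (fun x _ => hasDeriv_K b k x) (integ_w hb k hu)
    (by simpa using (tendsto_pow_exp_zero hb k).neg)
  rw [h]; ring

lemma integ_sw {b : ℝ} (hb : 0 < b) {k : ℕ} (hk : 1 ≤ k) (t : ℝ) {u : ℝ} (hu : 0 ≤ u) :
    IntegrableOn
      (fun s : ℝ => (s - t) * ((b * s ^ k - k * s ^ (k - 1)) * Real.exp (-(b * s)))) (Ioi u) := by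
  have h := (((integ_pow_exp hb (k+1) hu).const_mul b).sub
      ((integ_pow_exp hb k hu).const_mul ((k : ℝ) + b * t))).add
      ((integ_pow_exp hb (k-1) hu).const_mul ((k : ℝ) * t))
  refine IntegrableOn.congr_fun h (fun x _ => ?_) measurableSet_Ioi
  simp only [Pi.add_apply, Pi.sub_apply]
  have h1 : x ^ (k + 1) = x ^ k * x := pow_succ x k
  have h2 : x ^ k = x * x ^ (k - 1) := by
    rw [← pow_succ', Nat.sub_add_cancel hk]
  rw [h1, h2]; ring

lemma hasDeriv_sK (b t : ℝ) (k : ℕ) (s : ℝ) :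
    HasDerivAt (fun s : ℝ => -((s - t) * (s ^ k * Real.exp (-(b * s)))))
      ((s - t) * ((b * s ^ k - k * s ^ (k - 1)) * Real.exp (-(b * s)))
        - s ^ k * Real.exp (-(b * s))) s := by
  have h1 : HasDerivAt (fun s : ℝ => s - t) 1 s := (hasDerivAt_id s).sub_const t
  have h2 := (hasDerivAt_pow k s).mul (hasDeriv_exp_lin b s)
  have h := (h1.mul h2).neg
  refine h.congr_deriv ?_
  simp only [Pi.mul_apply]
  ring

lemma tendsto_sK {b : ℝ} (hb : 0 < b) (k : ℕ) (t : ℝ) :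
    Tendsto (fun s : ℝ => (s - t) * (s ^ k * Real.exp (-(b * s)))) atTop (nhds 0) := by
  have h := (tendsto_pow_exp_zero hb (k+1)).sub ((tendsto_pow_exp_zero hb k).const_mul t)
  simp only [mul_zero, sub_zero] at h
  refine h.congr fun s => ?_
  rw [pow_succ]
  ring

lemma ftcB {b : ℝ} (hb : 0 < b) {k : ℕ} (hk : 1 ≤ k) (t : ℝ) {a : ℝ} (ha : 0 ≤ a) :
    ∫ s in Ioi a, (s - t) * ((b * s ^ k - k * s ^ (k - 1)) * Real.exp (-(b * s)))
      = (∫ s in Ioi a, s ^ k * Real.exp (-(b * s)))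
        + (a - t) * (a ^ k * Real.exp (-(b * a))) := by
  have key := integral_Ioi_of_hasDerivAt_of_tendsto'
    (f := fun s : ℝ => -((s - t) * (s ^ k * Real.exp (-(b * s)))))
    (fun x _ => hasDeriv_sK b t k x)
    (((integ_sw hb hk t ha).sub (integ_pow_exp hb k ha)))
    (by simpa using (tendsto_sK hb k t).neg)
  rw [integral_sub (integ_sw hb hk t ha) (integ_pow_exp hb k ha)] at key
  simp only [zero_sub, neg_neg] at key
  linarith [key]

lemma gamma_int {b : ℝ} (hb : 0 < b) (k : ℕ) :
    ∫ s in Ioi 0, s ^ k * Real.exp (-(b * s)) = (Nat.factorial k : ℝ) / b ^ (k + 1) := by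
  have h := Real.integral_rpow_mul_exp_neg_mul_Ioi (a := (k : ℝ) + 1) (by positivity) hb
  have h1 : ∀ s ∈ Ioi (0:ℝ), s ^ ((k : ℝ) + 1 - 1) * Real.exp (-(b * s))
      = s ^ k * Real.exp (-(b * s)) := by
    intro s hs
    rw [add_sub_cancel_right, Real.rpow_natCast]
  rw [setIntegral_congr_fun measurableSet_Ioi h1] at h
  rw [h, Real.Gamma_nat_eq_factorial,
    show ((k : ℝ) + 1) = ((k + 1 : ℕ) : ℝ) by push_cast; ring, Real.rpow_natCast,
    div_pow, one_pow]
  ring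

lemma exp_tail_int {c : ℝ} (hc : 0 < c) {u : ℝ} (hu : 0 ≤ u) :
    ∫ s in Ioi u, Real.exp (-(c * s)) = Real.exp (-(c * u)) / c := by
  have h := ftcA hc 0 hu
  have h1 : ∀ s ∈ Ioi u, (c * s ^ 0 - ((0:ℕ) : ℝ) * s ^ (0 - 1)) * Real.exp (-(c * s))
      = c * Real.exp (-(c * s)) := by intro s _; simp
  rw [setIntegral_congr_fun measurableSet_Ioi h1, integral_const_mul] at h
  simp only [pow_zero, one_mul] at h
  field_simp
  linarith [h]

-- pointwise bound for the tail
lemma pointwise_tail {t δ : ℝ} (ht : 0 < t) (hδ : 0 < δ) {k : ℕ} (hk : 1 ≤ k) {s : ℝ}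
    (hs : 0 < s) :
    s ^ k * Real.exp (-(((k:ℝ)/t) * s))
      ≤ (t+δ) ^ k * Real.exp (-(k:ℝ)) * Real.exp (-(((k:ℝ) * δ / ((t+δ)*t)) * s)) := by
  set a := t + δ with ha
  have ha0 : 0 < a := by positivity
  have h1 : s ^ k ≤ a ^ k * Real.exp ((k:ℝ) * (s / a - 1)) := by
    have hlog : Real.log (s / a) ≤ s / a - 1 := Real.log_le_sub_one_of_pos (by positivity)
    have h2 : s ^ k = a ^ k * Real.exp ((k:ℝ) * Real.log (s / a)) := by
      rw [← Real.log_rpow (by positivity), Real.exp_log (by positivity),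
        Real.rpow_natCast, div_pow]
      field_simp
    rw [h2]
    have := Real.exp_le_exp.mpr (mul_le_mul_of_nonneg_left hlog (by positivity : (0:ℝ) ≤ (k:ℝ)))
    nlinarith [pow_pos ha0 k, this]
  calc s ^ k * Real.exp (-(((k:ℝ)/t) * s))
      ≤ (a ^ k * Real.exp ((k:ℝ) * (s / a - 1))) * Real.exp (-(((k:ℝ)/t) * s)) := by
        apply mul_le_mul_of_nonneg_right h1 (Real.exp_pos _).le
    _ = a ^ k * Real.exp (-(k:ℝ)) * Real.exp (-(((k:ℝ) * δ / (a*t)) * s)) := by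
        rw [mul_assoc, ← Real.exp_add, mul_assoc, ← Real.exp_add]
        congr 2
        have hane : a ≠ 0 := ne_of_gt ha0
        have htne : t ≠ 0 := ne_of_gt ht
        field_simp
        ring

lemma tail_int_bound {t δ : ℝ} (ht : 0 < t) (hδ : 0 < δ) {k : ℕ} (hk : 1 ≤ k) :
    ∫ s in Ioi (t+δ), s ^ k * Real.exp (-(((k:ℝ)/t) * s))
      ≤ ((t+δ) ^ k * Real.exp (-(((k:ℝ)/t) * (t+δ)))) * ((t+δ)*t/((k:ℝ)*δ)) := by
  set a := t + δ with ha
  have ha0 : 0 < a := by positivity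
  have hk0 : 0 < (k:ℝ) := by exact_mod_cast hk
  have hb : 0 < (k:ℝ)/t := by positivity
  have hc : 0 < (k:ℝ) * δ / (a*t) := by positivity
  have hint2 : IntegrableOn (fun s : ℝ => Real.exp (-(((k:ℝ)*δ/(a*t)) * s))) (Ioi a) := by
    have := integ_pow_exp hc 0 (u := a) ha0.le
    simpa using this
  have step1 : ∫ s in Ioi a, s ^ k * Real.exp (-(((k:ℝ)/t) * s))
      ≤ ∫ s in Ioi a, a ^ k * Real.exp (-(k:ℝ)) * Real.exp (-(((k:ℝ)*δ/(a*t)) * s)) := by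
    refine setIntegral_mono_on (integ_pow_exp hb k ha0.le)
      ((hint2.const_mul _)) measurableSet_Ioi ?_
    intro s hs
    exact pointwise_tail ht hδ hk (ha0.trans hs)
  rw [integral_const_mul, exp_tail_int hc ha0.le] at step1
  refine step1.trans_eq ?_
  rw [mul_assoc, mul_assoc]
  congr 1
  rw [div_eq_mul_inv, ← mul_assoc, ← Real.exp_add]
  congr 1
  · congr 1
    field_simp
    ring
  · rw [inv_div]

lemma ckKa_bound {t δ : ℝ} (ht : 0 < t) (hδ : 0 < δ) {k : ℕ} (hk : 1 ≤ k) :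
    (1/(Nat.factorial k : ℝ)) * ((k:ℝ)/t)^(k+1) * ((t+δ)^k * Real.exp (-(((k:ℝ)/t) * (t+δ))))
      ≤ ((k:ℝ)/t) * (((t+δ)/t) * Real.exp (-(δ/t)))^k := by
  set a := t + δ with ha
  have ha0 : 0 < a := by positivity
  have hk0 : 0 < (k:ℝ) := by exact_mod_cast hk
  have hfac : (0:ℝ) < (Nat.factorial k : ℝ) := by exact_mod_cast Nat.factorial_pos k
  have key : (k:ℝ)^k / (Nat.factorial k : ℝ) ≤ Real.exp (k:ℝ) :=
    Real.pow_div_factorial_le_exp (k:ℝ) (Nat.cast_nonneg k) k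
  have hexp : Real.exp (-(((k:ℝ)/t) * a)) = Real.exp (-(k:ℝ)) * Real.exp (-(δ/t))^k := by
    rw [← Real.exp_nat_mul, ← Real.exp_add]
    congr 1
    field_simp
    ring
  have hrw : (1/(Nat.factorial k : ℝ)) * ((k:ℝ)/t)^(k+1) * (a^k * Real.exp (-(((k:ℝ)/t) * a)))
      = ((k:ℝ)/t) * (((k:ℝ)^k / (Nat.factorial k : ℝ)) * Real.exp (-(k:ℝ)))
        * ((a/t) * Real.exp (-(δ/t)))^k := by
    rw [hexp, pow_succ, mul_pow, div_pow, div_pow]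
    field_simp
  rw [hrw]
  have h2 : ((k:ℝ)^k / (Nat.factorial k : ℝ)) * Real.exp (-(k:ℝ)) ≤ 1 := by
    have := mul_le_mul_of_nonneg_right key (Real.exp_pos (-(k:ℝ))).le
    rwa [← Real.exp_add, add_neg_cancel, Real.exp_zero] at this
  calc ((k:ℝ)/t) * (((k:ℝ)^k / (Nat.factorial k : ℝ)) * Real.exp (-(k:ℝ)))
        * ((a/t) * Real.exp (-(δ/t)))^k
      ≤ ((k:ℝ)/t) * 1 * ((a/t) * Real.exp (-(δ/t)))^k := by
        apply mul_le_mul_of_nonneg_right _ (by positivity)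
        apply mul_le_mul_of_nonneg_left h2 (by positivity)
    _ = ((k:ℝ)/t) * ((a/t) * Real.exp (-(δ/t)))^k := by ring

lemma rho_lt_one {t δ : ℝ} (ht : 0 < t) (hδ : 0 < δ) :
    ((t+δ)/t) * Real.exp (-(δ/t)) < 1 := by
  have h1 : Real.log ((t+δ)/t) < (t+δ)/t - 1 :=
    Real.log_lt_sub_one_of_pos (by positivity) (by
      intro h
      have : t + δ = t := by
        field_simp at h
        linarith
      linarith)
  have h2 : (t+δ)/t - 1 = δ/t := by field_simp; ring
  have h3 : (t+δ)/t < Real.exp (δ/t) := by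
    have := Real.exp_log (show (0:ℝ) < (t+δ)/t by positivity)
    rw [← this]
    exact Real.exp_lt_exp.mpr (by rw [h2] at h1; exact h1)
  calc ((t+δ)/t) * Real.exp (-(δ/t)) < Real.exp (δ/t) * Real.exp (-(δ/t)) :=
        mul_lt_mul_of_pos_right h3 (Real.exp_pos _)
    _ = 1 := by rw [← Real.exp_add, add_neg_cancel, Real.exp_zero]

lemma T_tendsto {t δ : ℝ} (ht : 0 < t) (hδ : 0 < δ) :
    Tendsto (fun k : ℕ => (1/(Nat.factorial k : ℝ)) * ((k:ℝ)/t)^(k+1) *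
      ((∫ s in Ioi (t+δ), s^k * Real.exp (-(((k:ℝ)/t) * s)))
        + δ * ((t+δ)^k * Real.exp (-(((k:ℝ)/t)*(t+δ)))))) atTop (nhds 0) := by
  set ρ := ((t+δ)/t) * Real.exp (-(δ/t)) with hρ
  have hρ0 : 0 ≤ ρ := by positivity
  have hρ1 : ρ < 1 := rho_lt_one ht hδ
  have hU : Tendsto (fun k : ℕ => ((t+δ)/δ) * ρ^k + (δ/t) * ((k:ℝ)^1 * ρ^k))
      atTop (nhds 0) := by
    have h1 := (tendsto_pow_atTop_nhds_zero_of_lt_one hρ0 hρ1).const_mul ((t+δ)/δ)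
    have h2 := (tendsto_pow_const_mul_const_pow_of_abs_lt_one 1
      (by rwa [abs_of_nonneg hρ0])).const_mul (δ/t)
    have := h1.add h2
    simpa using this
  refine tendsto_of_tendsto_of_tendsto_of_le_of_le' tendsto_const_nhds hU ?_ ?_
  · filter_upwards [eventually_ge_atTop 1] with k hk
    have hb : 0 < (k:ℝ)/t := by
      have : (0:ℝ) < (k:ℝ) := by exact_mod_cast hk
      positivity
    have h1 : 0 ≤ ∫ s in Ioi (t+δ), s^k * Real.exp (-(((k:ℝ)/t) * s)) := by
      refine setIntegral_nonneg measurableSet_Ioi (fun s hs => ?_)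
      have : (0:ℝ) < s := lt_trans (by positivity) hs
      positivity
    have h2 : (0:ℝ) ≤ δ * ((t+δ)^k * Real.exp (-(((k:ℝ)/t)*(t+δ)))) := by positivity
    positivity
  · filter_upwards [eventually_ge_atTop 1] with k hk
    have hk0 : (0:ℝ) < (k:ℝ) := by exact_mod_cast hk
    set a := t + δ with ha
    have ha0 : 0 < a := by positivity
    set Ka := a^k * Real.exp (-(((k:ℝ)/t)*a)) with hKa
    have hKa0 : 0 ≤ Ka := by positivity
    set ck := (1/(Nat.factorial k : ℝ)) * ((k:ℝ)/t)^(k+1) with hck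
    have hck0 : 0 ≤ ck := by positivity
    calc ck * ((∫ s in Ioi a, s^k * Real.exp (-(((k:ℝ)/t) * s))) + δ * Ka)
        ≤ ck * (Ka * (a*t/((k:ℝ)*δ)) + δ * Ka) := by
          refine mul_le_mul_of_nonneg_left ?_ hck0
          have := tail_int_bound ht hδ hk
          rw [← ha, ← hKa] at this
          linarith
      _ = (ck * Ka) * (a*t/((k:ℝ)*δ) + δ) := by ring
      _ ≤ (((k:ℝ)/t) * ρ^k) * (a*t/((k:ℝ)*δ) + δ) := by
          refine mul_le_mul_of_nonneg_right (ckKa_bound ht hδ hk) ?_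
          positivity
      _ = ((t+δ)/δ) * ρ^k + (δ/t) * ((k:ℝ)^1 * ρ^k) := by
          rw [pow_one]
          field_simp
          ring

lemma key_bound {t δ ε M : ℝ} (ht : 0 < t) (hδ : 0 < δ) (hε : 0 ≤ ε) (hM : 0 ≤ M)
    {k : ℕ} (hk : 1 ≤ k) {q : ℝ → ℝ} (hq : Measurable q) (hq0 : ∀ s, 0 ≤ q s)
    (hqM : ∀ᵐ u ∂(volume.restrict (Ioi t)), q u ≤ M)
    (hsmall : ∀ s ∈ Ioc t (t+δ), (∫ u in Ioc t s, q u) ≤ ε * (s - t)) :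
    ∫ s in Ioi t, (s ^ k * Real.exp (-(((k:ℝ)/t) * s))) * q s
      ≤ ε * ((Nat.factorial k : ℝ) / ((k:ℝ)/t) ^ (k+1))
        + M * ((∫ s in Ioi (t+δ), s ^ k * Real.exp (-(((k:ℝ)/t) * s)))
            + δ * ((t+δ)^k * Real.exp (-(((k:ℝ)/t)*(t+δ))))) := by
  have hk0 : (0:ℝ) < (k:ℝ) := by exact_mod_cast hk
  set b := (k:ℝ)/t with hbdef
  have hb : 0 < b := by positivity
  have hbt : b * t = (k:ℝ) := by simp only [hbdef]; field_simp
  set w : ℝ → ℝ := fun u => (b * u ^ k - k * u ^ (k - 1)) * Real.exp (-(b * u)) with hwdef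
  set Kf : ℝ → ℝ := fun s => s ^ k * Real.exp (-(b * s)) with hKfdef
  have hwm : Measurable w := by fun_prop
  have hKfm : Measurable Kf := by fun_prop
  set W : ℝ → ℝ≥0∞ := fun u => ENNReal.ofReal (w u) with hWdef
  set Q : ℝ → ℝ≥0∞ := fun s => ENNReal.ofReal (q s) with hQdef
  have hWm : Measurable W := ENNReal.measurable_ofReal.comp hwm
  have hQm : Measurable Q := ENNReal.measurable_ofReal.comp hq
  have hw0 : ∀ u, t ≤ u → 0 ≤ w u := by
    intro u hu
    have hu0 : 0 ≤ u := le_trans ht.le hu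
    have hkk : u ^ k = u * u ^ (k - 1) := by rw [← pow_succ', Nat.sub_add_cancel hk]
    have hrw : w u = b * (u - t) * u ^ (k-1) * Real.exp (-(b * u)) := by
      simp only [hwdef]
      rw [hkk, ← hbt]
      ring
    rw [hrw]
    have h1 : (0:ℝ) ≤ u - t := sub_nonneg.mpr hu
    positivity
  have hKf0 : ∀ s, 0 ≤ s → 0 ≤ Kf s := by
    intro s hs
    simp only [hKfdef]
    positivity
  have hKW : ∀ s, t < s → ENNReal.ofReal (Kf s) = ∫⁻ u in Ioi s, W u := by
    intro s hs
    have hs0 : 0 ≤ s := (ht.trans hs).le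
    have := ftcA hb k hs0
    simp only [hKfdef]
    rw [← this]
    refine ofReal_integral_eq_lintegral_ofReal (integ_w hb k hs0) ?_
    filter_upwards [ae_restrict_mem measurableSet_Ioi] with u hu
    exact hw0 u (le_of_lt (hs.trans hu))
  set F : ℝ × ℝ → ℝ≥0∞ :=
    fun p => ({p : ℝ × ℝ | t < p.1 ∧ p.1 < p.2}).indicator (fun p => W p.2 * Q p.1) p with hFdef
  have hSm : MeasurableSet {p : ℝ × ℝ | t < p.1 ∧ p.1 < p.2} := by
    exact (measurableSet_lt measurable_const measurable_fst).inter
      (measurableSet_lt measurable_fst measurable_snd)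
  have hFm : Measurable F :=
    Measurable.indicator ((hWm.comp measurable_snd).mul (hQm.comp measurable_fst)) hSm
  have hB1 : ∫⁻ s in Ioi t, ENNReal.ofReal (Kf s * q s) = ∫⁻ s, ∫⁻ u, F (s, u) := by
    rw [← lintegral_indicator measurableSet_Ioi]
    refine lintegral_congr fun s => ?_
    by_cases hs : s ∈ Ioi t
    · rw [indicator_of_mem hs]
      have hfe : ∀ u : ℝ, F (s, u) = (Ioi s).indicator (fun u => W u * Q s) u := by
        intro u
        simp only [hFdef]
        by_cases hu : s < u
        · rw [Set.indicator_of_mem (show (s,u) ∈ {p : ℝ × ℝ | t < p.1 ∧ p.1 < p.2} from ⟨hs, hu⟩),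
            Set.indicator_of_mem (show u ∈ Ioi s from hu)]
        · rw [Set.indicator_of_notMem (show (s,u) ∉ {p : ℝ × ℝ | t < p.1 ∧ p.1 < p.2}
              from fun h => hu h.2),
            Set.indicator_of_notMem (show u ∉ Ioi s from hu)]
      calc ENNReal.ofReal (Kf s * q s)
          = ENNReal.ofReal (Kf s) * Q s := ENNReal.ofReal_mul (hKf0 s (ht.trans hs).le)
        _ = (∫⁻ u in Ioi s, W u) * Q s := by rw [hKW s hs]
        _ = ∫⁻ u in Ioi s, W u * Q s := (lintegral_mul_const _ hWm).symm
        _ = ∫⁻ u, (Ioi s).indicator (fun u => W u * Q s) u := by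
            rw [lintegral_indicator measurableSet_Ioi]
        _ = ∫⁻ u, F (s, u) := lintegral_congr fun u => (hfe u).symm
    · rw [indicator_of_notMem hs]
      have hz : ∀ u : ℝ, F (s, u) = 0 := fun u =>
        Set.indicator_of_notMem (fun h => hs h.1) _
      simp only [hz, lintegral_zero]
  have hswap : ∫⁻ s, ∫⁻ u, F (s, u) = ∫⁻ u, ∫⁻ s, F (s, u) :=
    lintegral_lintegral_swap hFm.aemeasurable
  set Φ : ℝ → ℝ≥0∞ := fun u => ∫⁻ x in Ioo t u, Q x with hΦdef
  have hB2 : ∫⁻ u, ∫⁻ s, F (s, u) = ∫⁻ u in Ioi t, W u * Φ u := by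
    rw [← lintegral_indicator measurableSet_Ioi]
    refine lintegral_congr fun u => ?_
    have inner : ∀ s : ℝ, F (s, u) = (Ioo t u).indicator (fun s => W u * Q s) s := by
      intro s
      simp only [hFdef]
      by_cases hs : t < s ∧ s < u
      · rw [Set.indicator_of_mem (show (s,u) ∈ {p : ℝ × ℝ | t < p.1 ∧ p.1 < p.2} from hs),
          Set.indicator_of_mem (show s ∈ Ioo t u from hs)]
      · rw [Set.indicator_of_notMem (show (s,u) ∉ {p : ℝ × ℝ | t < p.1 ∧ p.1 < p.2} from hs),
          Set.indicator_of_notMem (show s ∉ Ioo t u from hs)]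
    by_cases hu : u ∈ Ioi t
    · rw [indicator_of_mem hu]
      calc ∫⁻ s, F (s, u) = ∫⁻ s, (Ioo t u).indicator (fun s => W u * Q s) s :=
            lintegral_congr inner
        _ = ∫⁻ s in Ioo t u, W u * Q s := by rw [lintegral_indicator measurableSet_Ioo]
        _ = W u * Φ u := lintegral_const_mul _ hQm
    · rw [indicator_of_notMem hu]
      have hOoo : Ioo t u = ∅ := Ioo_eq_empty (by simpa using hu)
      calc ∫⁻ s, F (s, u) = ∫⁻ s, (Ioo t u).indicator (fun s => W u * Q s) s :=
            lintegral_congr inner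
        _ = 0 := by rw [hOoo]; simp
  set a := t + δ with hadef
  have hta : t < a := by simp only [hadef]; linarith
  have ha0 : 0 < a := ht.trans hta
  -- near bound on Φ
  have hnear : ∀ u ∈ Ioc t a, Φ u ≤ ENNReal.ofReal (ε * (u - t)) := by
    intro u hu
    have hq_int : IntegrableOn q (Ioc t u) := by
      refine Integrable.mono' (integrable_const M) hq.aestronglyMeasurable.restrict ?_
      have hsub : Ioc t u ⊆ Ioi t := Ioc_subset_Ioi_self
      filter_upwards [ae_restrict_of_ae_restrict_of_subset hsub hqM] with x hx
      rw [Real.norm_eq_abs, abs_of_nonneg (hq0 x)]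
      exact hx
    calc Φ u ≤ ∫⁻ x in Ioc t u, Q x := lintegral_mono_set Ioo_subset_Ioc_self
      _ = ENNReal.ofReal (∫ x in Ioc t u, q x) :=
          (ofReal_integral_eq_lintegral_ofReal hq_int (ae_of_all _ hq0)).symm
      _ ≤ ENNReal.ofReal (ε * (u - t)) := ENNReal.ofReal_le_ofReal (hsmall u hu)
  -- far bound on Φ
  have hfar : ∀ u, t < u → Φ u ≤ ENNReal.ofReal (M * (u - t)) := by
    intro u hu
    calc Φ u ≤ ∫⁻ _x in Ioo t u, ENNReal.ofReal M := by
          refine lintegral_mono_ae ?_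
          have hsub : Ioo t u ⊆ Ioi t := Ioo_subset_Ioi_self
          filter_upwards [ae_restrict_of_ae_restrict_of_subset hsub hqM] with x hx
          exact ENNReal.ofReal_le_ofReal hx
      _ = ENNReal.ofReal M * volume (Ioo t u) := by rw [setLIntegral_const]
      _ ≤ ENNReal.ofReal (M * (u - t)) := by
          rw [Real.volume_Ioo, ← ENNReal.ofReal_mul hM]
  -- split the main lintegral
  have hsplit : ∫⁻ u in Ioi t, W u * Φ u
      = (∫⁻ u in Ioc t a, W u * Φ u) + ∫⁻ u in Ioi a, W u * Φ u := by
    rw [← Ioc_union_Ioi_eq_Ioi hta.le,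
      lintegral_union measurableSet_Ioi Ioc_disjoint_Ioi_same]
  -- near part
  have hnear2 : ∫⁻ u in Ioc t a, W u * Φ u
      ≤ ENNReal.ofReal (ε * ((Nat.factorial k : ℝ) / b ^ (k+1))) := by
    have hint : IntegrableOn (fun u : ℝ => w u * (ε * (u - t))) (Ioi t) := by
      refine IntegrableOn.congr_fun ((integ_sw hb hk t ht.le).const_mul ε)
        (fun u _ => by simp only [hwdef]; ring) measurableSet_Ioi
    calc ∫⁻ u in Ioc t a, W u * Φ u
        ≤ ∫⁻ u in Ioc t a, W u * ENNReal.ofReal (ε * (u - t)) := by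
          refine lintegral_mono_ae ?_
          filter_upwards [ae_restrict_mem measurableSet_Ioc] with u hu
          exact mul_le_mul_right (hnear u hu) _
      _ ≤ ∫⁻ u in Ioi t, W u * ENNReal.ofReal (ε * (u - t)) :=
          lintegral_mono_set Ioc_subset_Ioi_self
      _ = ∫⁻ u in Ioi t, ENNReal.ofReal (w u * (ε * (u - t))) := by
          refine setLIntegral_congr_fun measurableSet_Ioi (fun u hu => ?_)
          rw [ENNReal.ofReal_mul (hw0 u (le_of_lt hu))]
      _ = ENNReal.ofReal (∫ u in Ioi t, w u * (ε * (u - t))) := by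
          refine (ofReal_integral_eq_lintegral_ofReal hint ?_).symm
          filter_upwards [ae_restrict_mem measurableSet_Ioi] with u hu
          exact mul_nonneg (hw0 u hu.le) (mul_nonneg hε (sub_nonneg.mpr hu.le))
      _ = ENNReal.ofReal (ε * ((∫ u in Ioi t, Kf u) + (t - t) * Kf t)) := by
          rw [← ftcB hb hk t ht.le]
          congr 1
          rw [show (fun u : ℝ => w u * (ε * (u - t)))
              = fun u : ℝ => ε * ((u - t) * w u) from funext fun u => by ring,
            integral_const_mul]
      _ ≤ ENNReal.ofReal (ε * ((Nat.factorial k : ℝ) / b ^ (k+1))) := by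
          refine ENNReal.ofReal_le_ofReal ?_
          refine mul_le_mul_of_nonneg_left ?_ hε
          have hmono : ∫ u in Ioi t, Kf u ≤ ∫ u in Ioi 0, Kf u := by
            refine setIntegral_mono_set (integ_pow_exp hb k le_rfl) ?_
              (HasSubset.Subset.eventuallyLE (Ioi_subset_Ioi ht.le))
            filter_upwards [ae_restrict_mem measurableSet_Ioi] with u hu
            exact hKf0 u hu.le
          have := gamma_int hb k
          simp only [hKfdef] at hmono ⊢
          rw [this] at hmono
          simp only [sub_self, zero_mul, add_zero]
          exact hmono
  -- far part
  have hfar2 : ∫⁻ u in Ioi a, W u * Φ u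
      ≤ ENNReal.ofReal (M * ((∫ u in Ioi a, Kf u) + δ * Kf a)) := by
    have hint : IntegrableOn (fun u : ℝ => w u * (M * (u - t))) (Ioi a) := by
      refine IntegrableOn.congr_fun ((integ_sw hb hk t ha0.le).const_mul M)
        (fun u _ => by simp only [hwdef]; ring) measurableSet_Ioi
    calc ∫⁻ u in Ioi a, W u * Φ u
        ≤ ∫⁻ u in Ioi a, W u * ENNReal.ofReal (M * (u - t)) := by
          refine lintegral_mono_ae ?_
          filter_upwards [ae_restrict_mem measurableSet_Ioi] with u hu
          exact mul_le_mul_right (hfar u (hta.trans hu)) _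
      _ = ∫⁻ u in Ioi a, ENNReal.ofReal (w u * (M * (u - t))) := by
          refine setLIntegral_congr_fun measurableSet_Ioi (fun u hu => ?_)
          rw [ENNReal.ofReal_mul (hw0 u (hta.trans hu).le)]
      _ = ENNReal.ofReal (∫ u in Ioi a, w u * (M * (u - t))) := by
          refine (ofReal_integral_eq_lintegral_ofReal hint ?_).symm
          filter_upwards [ae_restrict_mem measurableSet_Ioi] with u hu
          exact mul_nonneg (hw0 u (hta.trans hu).le)
            (mul_nonneg hM (sub_nonneg.mpr (hta.trans hu).le))
      _ = ENNReal.ofReal (M * ((∫ u in Ioi a, Kf u) + δ * Kf a)) := by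
          congr 1
          rw [show (fun u : ℝ => w u * (M * (u - t)))
              = fun u : ℝ => M * ((u - t) * w u) from funext fun u => by ring,
            integral_const_mul, ftcB hb hk t ha0.le]
          congr 2
          · simp only [hadef]; ring
  -- nonnegativity of pieces
  have htail0 : 0 ≤ ∫ u in Ioi a, Kf u := by
    refine setIntegral_nonneg measurableSet_Ioi fun u hu => hKf0 u (ha0.trans hu).le
  have hKfa0 : 0 ≤ Kf a := hKf0 a ha0.le
  have hγ0 : (0:ℝ) ≤ (Nat.factorial k : ℝ) / b ^ (k+1) := by positivity
  -- assemble
  have hchain : ∫⁻ s in Ioi t, ENNReal.ofReal (Kf s * q s)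
      ≤ ENNReal.ofReal (ε * ((Nat.factorial k : ℝ) / b ^ (k+1))
          + M * ((∫ u in Ioi a, Kf u) + δ * Kf a)) := by
    rw [hB1, hswap, hB2, hsplit,
      ENNReal.ofReal_add (mul_nonneg hε hγ0)
        (mul_nonneg hM (by positivity))]
    exact add_le_add hnear2 hfar2
  have hLeq : ∫ s in Ioi t, Kf s * q s
      = (∫⁻ s in Ioi t, ENNReal.ofReal (Kf s * q s)).toReal := by
    refine integral_eq_lintegral_of_nonneg_ae ?_ ?_
    · filter_upwards [ae_restrict_mem measurableSet_Ioi] with s hs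
      exact mul_nonneg (hKf0 s (ht.trans hs).le) (hq0 s)
    · exact (hKfm.mul hq).aestronglyMeasurable
  calc ∫ s in Ioi t, Kf s * q s
      = (∫⁻ s in Ioi t, ENNReal.ofReal (Kf s * q s)).toReal := hLeq
    _ ≤ ε * ((Nat.factorial k : ℝ) / b ^ (k+1))
          + M * ((∫ u in Ioi a, Kf u) + δ * Kf a) := by
        refine ENNReal.toReal_le_of_le_ofReal ?_ hchain
        have : (0:ℝ) ≤ M * ((∫ u in Ioi a, Kf u) + δ * Kf a) :=
          mul_nonneg hM (by positivity)
        nlinarith [mul_nonneg hε hγ0]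
    _ = ε * ((Nat.factorial k : ℝ) / b ^ (k+1))
          + M * ((∫ s in Ioi (t+δ), s ^ k * Real.exp (-(b * s)))
            + δ * ((t+δ)^k * Real.exp (-(b*(t+δ))))) := by
        simp only [hKfdef, hadef]

end LaplaceAux

open LaplaceAux in
/-- If `f : [0,∞) → X` is strongly measurable and essentially bounded with right
approximate limit `fp` at `t > 0`, then the contribution of `[t,∞)` to the normalized
Laplace integrals of `f - fp` vanishes as `k → ∞`. -/
theorem laplace_right_contribution_vanishes
    {X : Type*} [NormedAddCommGroup X] [NormedSpace ℝ X] [CompleteSpace X]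
    (f : ℝ → X)
    (hmeas : AEStronglyMeasurable f (volume.restrict (Ici (0 : ℝ))))
    (C : ℝ) (hbdd : ∀ᵐ s ∂(volume.restrict (Ici (0 : ℝ))), ‖f s‖ ≤ C)
    (t : ℝ) (ht : 0 < t) (fp : X)
    (hright : Tendsto (fun h : ℝ => (1 / h) * ∫ s in Ioc t (t + h), ‖f s - fp‖)
      (nhdsWithin 0 (Ioi 0)) (nhds 0)) :
    Tendsto (fun k : ℕ =>
        ((1 / (Nat.factorial k : ℝ)) * ((k : ℝ) / t) ^ (k + 1)) •
          ∫ s in Ioi t, (s ^ k * Real.exp (-(((k : ℝ) / t) * s))) • (f s - fp))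
      atTop (nhds 0) := by
  set M : ℝ := |C| + ‖fp‖ with hMdef
  have hM : 0 ≤ M := by positivity
  set q : ℝ → ℝ := fun s => ‖hmeas.mk f s - fp‖ with hqdef
  have hq : Measurable q :=
    ((hmeas.stronglyMeasurable_mk.sub stronglyMeasurable_const).norm).measurable
  have hq0 : ∀ s, 0 ≤ q s := fun s => norm_nonneg _
  have hqf : ∀ᵐ s ∂(volume.restrict (Ici (0:ℝ))), q s = ‖f s - fp‖ := by
    filter_upwards [hmeas.ae_eq_mk] with s hs
    simp only [hqdef]
    rw [← hs]
  have hsub : Ioi t ⊆ Ici (0:ℝ) := fun x hx => le_of_lt (ht.trans hx)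
  have hqM : ∀ᵐ u ∂(volume.restrict (Ioi t)), q u ≤ M := by
    filter_upwards [ae_restrict_of_ae_restrict_of_subset hsub hqf,
      ae_restrict_of_ae_restrict_of_subset hsub hbdd] with u h1 h2
    rw [h1]
    calc ‖f u - fp‖ ≤ ‖f u‖ + ‖fp‖ := norm_sub_le _ _
      _ ≤ |C| + ‖fp‖ := by
          have : ‖f u‖ ≤ |C| := h2.trans (le_abs_self C)
          linarith
  refine NormedAddCommGroup.tendsto_nhds_zero.mpr (fun ε0 hε0 => ?_)
  rw [Metric.tendsto_nhdsWithin_nhds] at hright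
  obtain ⟨δ', hδ', hδprop⟩ := hright (ε0/4) (by positivity)
  set δ : ℝ := δ'/2 with hδdef
  have hδ : 0 < δ := by positivity
  have hsmall : ∀ s ∈ Ioc t (t+δ), (∫ u in Ioc t s, q u) ≤ (ε0/4) * (s - t) := by
    intro s hs
    have hst : 0 < s - t := by linarith [hs.1]
    have hdist : dist (s - t) 0 < δ' := by
      rw [Real.dist_eq, sub_zero, abs_of_pos hst]
      have := hs.2
      simp only [hδdef] at this ⊢
      linarith
    have hx := hδprop (mem_Ioi.mpr hst) hdist
    rw [Real.dist_eq, sub_zero] at hx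
    have heq : ∫ u in Ioc t s, q u = ∫ u in Ioc t (t + (s - t)), ‖f u - fp‖ := by
      rw [show t + (s - t) = s by ring]
      refine setIntegral_congr_ae measurableSet_Ioc ?_
      have h0 := (ae_restrict_iff' measurableSet_Ici).mp hqf
      filter_upwards [h0] with x hx1 hx2
      exact hx1 (le_of_lt (ht.trans hx2.1))
    have h2 : (1/(s-t)) * ∫ u in Ioc t (t + (s - t)), ‖f u - fp‖ ≤ ε0/4 :=
      le_of_lt (lt_of_abs_lt hx)
    have h3 := mul_le_mul_of_nonneg_left h2 hst.le
    rw [heq]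
    calc ∫ u in Ioc t (t + (s - t)), ‖f u - fp‖
        = (s - t) * ((1/(s-t)) * ∫ u in Ioc t (t + (s - t)), ‖f u - fp‖) := by
          field_simp
      _ ≤ (s - t) * (ε0/4) := h3
      _ = (ε0/4) * (s - t) := by ring
  have hT := (T_tendsto ht hδ).const_mul M
  rw [mul_zero] at hT
  have hTev : ∀ᶠ k : ℕ in atTop,
      M * ((1/(Nat.factorial k : ℝ)) * ((k:ℝ)/t)^(k+1) *
        ((∫ s in Ioi (t+δ), s^k * Real.exp (-(((k:ℝ)/t) * s)))
          + δ * ((t+δ)^k * Real.exp (-(((k:ℝ)/t)*(t+δ)))))) < ε0/2 :=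
    hT.eventually_lt_const (by linarith)
  filter_upwards [hTev, eventually_ge_atTop 1] with k hk2 hk1
  have hk0 : (0:ℝ) < (k:ℝ) := by exact_mod_cast hk1
  have hb : 0 < (k:ℝ)/t := by positivity
  set ck : ℝ := (1 / (Nat.factorial k : ℝ)) * ((k:ℝ)/t) ^ (k+1) with hckdef
  have hck0 : 0 ≤ ck := by positivity
  have hfac : (0:ℝ) < (Nat.factorial k : ℝ) := by exact_mod_cast Nat.factorial_pos k
  have hkb := key_bound ht hδ (by positivity : (0:ℝ) ≤ ε0/4) hM hk1 hq hq0 hqM hsmall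
  have hnorm : ‖ck • ∫ s in Ioi t, (s ^ k * Real.exp (-(((k:ℝ)/t) * s))) • (f s - fp)‖
      ≤ ck * ∫ s in Ioi t, (s ^ k * Real.exp (-(((k:ℝ)/t) * s))) * q s := by
    rw [norm_smul, Real.norm_eq_abs, abs_of_nonneg hck0]
    refine mul_le_mul_of_nonneg_left ?_ hck0
    refine (norm_integral_le_integral_norm _).trans ?_
    refine le_of_eq ?_
    refine setIntegral_congr_ae measurableSet_Ioi ?_
    have h0 := (ae_restrict_iff' measurableSet_Ici).mp hqf
    have h0' : ∀ᵐ x ∂(volume : Measure ℝ), x ∈ Ioi t →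
        ‖(x ^ k * Real.exp (-(((k:ℝ)/t) * x))) • (f x - fp)‖
          = (x ^ k * Real.exp (-(((k:ℝ)/t) * x))) * q x := by
      filter_upwards [h0] with x hx1 hx2
      rw [norm_smul, Real.norm_eq_abs, hx1 (le_of_lt (ht.trans hx2))]
      congr 1
      have hx0 : (0:ℝ) < x := ht.trans hx2
      exact abs_of_nonneg (by positivity)
    exact h0'
  have hone : ck * ((Nat.factorial k : ℝ) / ((k:ℝ)/t) ^ (k+1)) = 1 := by
    simp only [hckdef]
    field_simp
  calc ‖ck • ∫ s in Ioi t, (s ^ k * Real.exp (-(((k:ℝ)/t) * s))) • (f s - fp)‖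
      ≤ ck * ∫ s in Ioi t, (s ^ k * Real.exp (-(((k:ℝ)/t) * s))) * q s := hnorm
    _ ≤ ck * ((ε0/4) * ((Nat.factorial k : ℝ) / ((k:ℝ)/t) ^ (k+1))
          + M * ((∫ s in Ioi (t+δ), s ^ k * Real.exp (-(((k:ℝ)/t) * s)))
            + δ * ((t+δ)^k * Real.exp (-(((k:ℝ)/t)*(t+δ)))))) :=
        mul_le_mul_of_nonneg_left hkb hck0
    _ = (ε0/4) * (ck * ((Nat.factorial k : ℝ) / ((k:ℝ)/t) ^ (k+1)))
          + M * (ck * ((∫ s in Ioi (t+δ), s ^ k * Real.exp (-(((k:ℝ)/t) * s)))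
            + δ * ((t+δ)^k * Real.exp (-(((k:ℝ)/t)*(t+δ)))))) := by ring
    _ < ε0 := by
        rw [hone, mul_one]
        have := hk2
        simp only [hckdef] at this ⊢
        linarith
end

section
/- For every t > 0, lim_{k→∞} (1/k!) (k/t)^{k+1} ∫_0^t s^k e^{−(k/t) s} ds = 1/2. Equivalently, lim_{k→∞} e^{−k} Σ_{l=0}^{k} k^l / l! = 1/2. -/
open MeasureTheory Filter Set

lemma aux_hasDerivAt {x : ℝ} (hx : -1 < x) :
    HasDerivAt (fun x : ℝ => x - x ^ 2 / 2 - Real.log (1 + x))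
      (1 - x - (1 + x)⁻¹) x := by
  have h1 : HasDerivAt (fun x : ℝ => x - x ^ 2 / 2) (1 - x) x := by
    have := (hasDerivAt_id x).fun_sub (((hasDerivAt_pow 2 x).div_const 2))
    simpa using this
  have h2 : HasDerivAt (fun x : ℝ => Real.log (1 + x)) ((1 + x)⁻¹) x := by
    have := ((hasDerivAt_id x).const_add 1).log (by simp only [id_eq]; intro h; linarith)
    simpa using this
  simpa using h1.fun_sub h2

lemma aux_log_le {s : ℝ} (hs1 : -1 < s) (hs0 : s ≤ 0) :
    Real.log (1 + s) ≤ s - s ^ 2 / 2 := by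
  have key : AntitoneOn (fun x : ℝ => x - x ^ 2 / 2 - Real.log (1 + x)) (Icc s 0) := by
    apply antitoneOn_of_deriv_nonpos (convex_Icc s 0)
    · apply ContinuousOn.sub (by fun_prop)
      apply ContinuousOn.log (by fun_prop)
      intro x hx
      have := hx.1
      nlinarith [hx.2]
    · intro x hx
      rw [interior_Icc] at hx
      exact (aux_hasDerivAt (x := x) (by linarith [hx.1])).differentiableAt.differentiableWithinAt
    · intro x hx
      rw [interior_Icc] at hx
      have hx1 : -1 < x := by linarith [hx.1]
      rw [(aux_hasDerivAt hx1).deriv]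
      have h0 : (0:ℝ) < 1 + x := by linarith
      rw [sub_nonpos, ← sub_nonneg]
      have : (1+x)⁻¹ - (1 - x) = x^2 / (1+x) := by
        field_simp; ring
      rw [this]
      positivity
  have := key (left_mem_Icc.2 hs0) (right_mem_Icc.2 hs0) hs0
  simp only [Real.log_one] at this
  simp only [add_zero, Real.log_one] at this
  linarith

lemma aux_sqrt_tendsto : Tendsto (fun k : ℕ => Real.sqrt k) atTop atTop := by
  have h : Tendsto (fun x : ℝ => x ^ (1/2 : ℝ)) atTop atTop := tendsto_rpow_atTop (by norm_num)
  exact (h.comp tendsto_natCast_atTop_atTop).congr fun k => by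
    simp [Function.comp, Real.sqrt_eq_rpow]

lemma aux_exponent (x : ℝ) :
    Tendsto (fun k : ℕ => (k : ℝ) * Real.log (1 + x / Real.sqrt k) - Real.sqrt k * x)
      atTop (nhds (-(x ^ 2 / 2))) := by
  have hb : Tendsto (fun k : ℕ => 2 * |x| ^ 3 / Real.sqrt k) atTop (nhds 0) :=
    Tendsto.div_atTop tendsto_const_nhds aux_sqrt_tendsto
  rw [← tendsto_sub_nhds_zero_iff]
  refine squeeze_zero_norm' ?_ hb
  filter_upwards [aux_sqrt_tendsto.eventually_ge_atTop (max 1 (2 * |x|)),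
    eventually_gt_atTop 0] with k hk hk0
  have hk1 : (1 : ℝ) ≤ Real.sqrt k := le_trans (le_max_left _ _) hk
  have hk2 : 2 * |x| ≤ Real.sqrt k := le_trans (le_max_right _ _) hk
  have hkpos : (0 : ℝ) < Real.sqrt k := by linarith
  set s : ℝ := x / Real.sqrt k with hs
  have hsabs : |s| ≤ 1 / 2 := by
    rw [hs, abs_div, abs_of_pos hkpos, div_le_iff₀ hkpos]
    linarith
  have hslt : |(-s)| < 1 := by rw [abs_neg]; linarith
  have key := Real.abs_log_sub_add_sum_range_le hslt 2
  have hsum : (∑ i ∈ Finset.range 2, (-s) ^ (i + 1) / (i + 1)) = -s + s ^ 2 / 2 := by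
    simp [Finset.sum_range_succ]; ring
  rw [hsum, sub_neg_eq_add] at key
  -- key : |(-s + s^2/2) + Real.log (1 + s)| ≤ |(-s)|^3 / (1 - |(-s)|)
  have hss : Real.sqrt k * Real.sqrt k = (k : ℝ) := Real.mul_self_sqrt (Nat.cast_nonneg k)
  have hkne : (Real.sqrt k) ≠ 0 := hkpos.ne'
  have hks2 : (k : ℝ) * s ^ 2 = x ^ 2 := by
    rw [hs, div_pow, Real.sq_sqrt (Nat.cast_nonneg k)]
    field_simp
  have hkx : (k : ℝ) * s = Real.sqrt k * x := by
    rw [show s = x / Real.sqrt k from rfl, mul_div_assoc', div_eq_iff hkne]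
    linear_combination (-x) * hss
  calc ‖(k : ℝ) * Real.log (1 + s) - Real.sqrt k * x - -(x ^ 2 / 2)‖
      = (k : ℝ) * |(-s + s ^ 2 / 2) + Real.log (1 + s)| := by
        rw [Real.norm_eq_abs, show (k : ℝ) * Real.log (1 + s) - Real.sqrt k * x - -(x ^ 2 / 2)
          = (k : ℝ) * ((-s + s ^ 2 / 2) + Real.log (1 + s)) by
            linear_combination hkx - hks2 / 2,
          abs_mul, abs_of_nonneg (Nat.cast_nonneg k : (0:ℝ) ≤ k)]
    _ ≤ (k : ℝ) * (|(-s)| ^ 3 / (1 - |(-s)|)) := by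
        exact mul_le_mul_of_nonneg_left key (Nat.cast_nonneg k)
    _ ≤ 2 * |x| ^ 3 / Real.sqrt k := by
        rw [abs_neg]
        have h1 : 1 - |s| ≥ 1 / 2 := by linarith
        have h2 : |s| ^ 3 / (1 - |s|) ≤ 2 * |s| ^ 3 := by
          rw [div_le_iff₀ (by linarith)]
          nlinarith [abs_nonneg s, pow_nonneg (abs_nonneg s) 3]
        have h3 : (k : ℝ) * |s| ^ 3 = |x| ^ 3 / Real.sqrt k := by
          rw [hs, abs_div, abs_of_pos hkpos, div_pow,
            show Real.sqrt k ^ 3 = (k : ℝ) * Real.sqrt k by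
              rw [pow_succ, Real.sq_sqrt (Nat.cast_nonneg k)]]
          field_simp
        calc (k : ℝ) * (|s| ^ 3 / (1 - |s|)) ≤ (k : ℝ) * (2 * |s| ^ 3) :=
              mul_le_mul_of_nonneg_left h2 (Nat.cast_nonneg k)
          _ = 2 * (|x| ^ 3 / Real.sqrt k) := by rw [show (k:ℝ) * (2 * |s|^3) = 2 * ((k:ℝ) * |s|^3) by ring, h3]
          _ = 2 * |x| ^ 3 / Real.sqrt k := by ring

noncomputable def gfun (k : ℕ) (x : ℝ) : ℝ :=
  (1 + x / Real.sqrt k) ^ k * Real.exp (-(Real.sqrt k * x))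

lemma gfun_eq_exp {k : ℕ} {x : ℝ} (h : 0 < 1 + x / Real.sqrt k) :
    gfun k x = Real.exp ((k : ℝ) * Real.log (1 + x / Real.sqrt k) - Real.sqrt k * x) := by
  rw [gfun, ← Real.rpow_natCast, Real.rpow_def_of_pos h, Real.exp_sub]
  rw [mul_comm (Real.log _) (k : ℝ), Real.exp_neg]
  exact (div_eq_mul_inv _ _).symm

lemma aux_ks {k : ℕ} (hk : 1 ≤ k) (x : ℝ) :
    (k : ℝ) * (x / Real.sqrt k) = Real.sqrt k * x ∧
      (k : ℝ) * (x / Real.sqrt k) ^ 2 = x ^ 2 := by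
  have hkpos : (0 : ℝ) < Real.sqrt k := Real.sqrt_pos.2 (by exact_mod_cast hk)
  have hss : Real.sqrt k * Real.sqrt k = (k : ℝ) := Real.mul_self_sqrt (Nat.cast_nonneg k)
  constructor
  · rw [mul_div_assoc', div_eq_iff hkpos.ne']
    linear_combination (-x) * hss
  · rw [div_pow, Real.sq_sqrt (Nat.cast_nonneg k)]
    field_simp

lemma gfun_nonneg {k : ℕ} {x : ℝ} (hx1 : -(Real.sqrt k) ≤ x) : 0 ≤ gfun k x := by
  rcases Nat.eq_zero_or_pos k with h | h
  · simp [gfun, h]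
  have hkpos : (0 : ℝ) < Real.sqrt k := Real.sqrt_pos.2 (by exact_mod_cast h)
  have h2 : -1 ≤ x / Real.sqrt k := by
    rw [le_div_iff₀ hkpos]
    linarith
  exact mul_nonneg (pow_nonneg (by linarith) k) (Real.exp_nonneg _)

lemma gfun_le {k : ℕ} (hk : 1 ≤ k) {x : ℝ} (hx1 : -(Real.sqrt k) < x) (hx2 : x ≤ 0) :
    gfun k x ≤ Real.exp (-(1/2) * x ^ 2) := by
  have hkpos : (0 : ℝ) < Real.sqrt k := Real.sqrt_pos.2 (by exact_mod_cast hk)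
  set s : ℝ := x / Real.sqrt k with hs
  have hs1 : -1 < s := by
    rw [hs, lt_div_iff₀ hkpos]
    linarith
  have hs0 : s ≤ 0 := by
    rw [hs, div_nonpos_iff]
    have := hkpos.le
    tauto
  have hpos : 0 < 1 + s := by linarith
  rw [gfun_eq_exp hpos, Real.exp_le_exp]
  have hlog := aux_log_le hs1 hs0
  obtain ⟨h1, h2⟩ := aux_ks hk x
  calc (k : ℝ) * Real.log (1 + s) - Real.sqrt k * x
      ≤ (k : ℝ) * (s - s ^ 2 / 2) - Real.sqrt k * x :=
        sub_le_sub_right (mul_le_mul_of_nonneg_left hlog (Nat.cast_nonneg k)) _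
    _ = -(1/2) * x ^ 2 := by
        rw [mul_sub, h1, show (k : ℝ) * (s ^ 2 / 2) = ((k : ℝ) * s ^ 2) / 2 by ring, h2]
        ring

lemma gfun_tendsto (x : ℝ) :
    Tendsto (fun k : ℕ => gfun k x) atTop (nhds (Real.exp (-(1/2) * x ^ 2))) := by
  have h1 : Tendsto (fun k : ℕ =>
      Real.exp ((k : ℝ) * Real.log (1 + x / Real.sqrt k) - Real.sqrt k * x)) atTop
      (nhds (Real.exp (-(x ^ 2 / 2)))) :=
    (Real.continuous_exp.tendsto _).comp (aux_exponent x)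
  rw [show (-(1/2) * x ^ 2 : ℝ) = -(x ^ 2 / 2) by ring]
  refine h1.congr' ?_
  filter_upwards [aux_sqrt_tendsto.eventually_gt_atTop (|x|)] with k hk
  have hkpos : (0 : ℝ) < Real.sqrt k := lt_of_le_of_lt (abs_nonneg x) hk
  have h2 : -1 < x / Real.sqrt k := by
    rw [lt_div_iff₀ hkpos]
    linarith [neg_abs_le x]
  exact (gfun_eq_exp (by linarith)).symm

lemma gfun_continuous (k : ℕ) : Continuous (gfun k) := by
  unfold gfun
  fun_prop

lemma aux_Jneg_tendsto :
    Tendsto (fun k : ℕ => ∫ x in Ioc (-(Real.sqrt k)) 0, gfun k x) atTop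
      (nhds (∫ x in Iic (0:ℝ), Real.exp (-(1/2) * x ^ 2))) := by
  have key := MeasureTheory.tendsto_integral_of_dominated_convergence
    (μ := volume.restrict (Iic (0:ℝ)))
    (F := fun (k : ℕ) (x : ℝ) => Set.indicator (Ioi (-(Real.sqrt k))) (gfun k) x)
    (f := fun x : ℝ => Real.exp (-(1/2) * x ^ 2))
    (bound := fun x : ℝ => Real.exp (-(1/2) * x ^ 2))
    (fun k => ((gfun_continuous k).aestronglyMeasurable).indicator measurableSet_Ioi)
    ((integrable_exp_neg_mul_sq (by norm_num)).integrableOn)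
    ?_ ?_
  · refine key.congr fun k => ?_
    rw [MeasureTheory.setIntegral_indicator measurableSet_Ioi]
    congr 1
    rw [Set.inter_comm, Set.Ioi_inter_Iic]
  · -- bound
    intro k
    filter_upwards [MeasureTheory.ae_restrict_mem measurableSet_Iic] with x hx
    by_cases hmem : x ∈ Ioi (-(Real.sqrt k))
    · rw [Set.indicator_of_mem hmem]
      rcases Nat.eq_zero_or_pos k with rfl | hk
      · simp at hmem hx
        exact absurd (lt_of_lt_of_le hmem hx) (lt_irrefl 0)
      · rw [Real.norm_eq_abs, abs_of_nonneg (gfun_nonneg (le_of_lt hmem))]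
        exact gfun_le hk hmem hx
    · rw [Set.indicator_of_notMem hmem]
      simp [Real.exp_nonneg]
  · -- pointwise limit
    filter_upwards [MeasureTheory.ae_restrict_mem measurableSet_Iic] with x hx
    refine (gfun_tendsto x).congr' ?_
    filter_upwards [aux_sqrt_tendsto.eventually_gt_atTop (-x)] with k hk
    exact (Set.indicator_of_mem (by simpa using (neg_lt_of_neg_lt hk) : x ∈ Ioi (-(Real.sqrt k))) _).symm

lemma aux_change {k : ℕ} (hk : 1 ≤ k) :
    ∫ u in Ioc (0:ℝ) (k:ℝ), u ^ k * Real.exp (-u)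
      = (k:ℝ) ^ k * Real.exp (-(k:ℝ)) * Real.sqrt k *
          ∫ x in Ioc (-(Real.sqrt k)) 0, gfun k x := by
  have hkpos : (0 : ℝ) < Real.sqrt k := Real.sqrt_pos.2 (by exact_mod_cast hk)
  have hss : Real.sqrt k * Real.sqrt k = (k : ℝ) := Real.mul_self_sqrt (Nat.cast_nonneg k)
  have h1 := intervalIntegral.integral_comp_mul_add
    (f := fun u : ℝ => u ^ k * Real.exp (-u)) (a := -(Real.sqrt k)) (b := 0)
    (c := Real.sqrt k) hkpos.ne' (k : ℝ)
  have hend : Real.sqrt k * -(Real.sqrt k) + (k:ℝ) = 0 := by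
    rw [mul_neg, hss]; ring
  rw [hend, mul_zero, zero_add] at h1
  have h2 : ∀ x : ℝ, (Real.sqrt k * x + (k:ℝ)) ^ k * Real.exp (-(Real.sqrt k * x + (k:ℝ)))
      = (k:ℝ) ^ k * Real.exp (-(k:ℝ)) * gfun k x := by
    intro x
    obtain ⟨hA, -⟩ := aux_ks hk x
    have harg : Real.sqrt k * x + (k:ℝ) = (k:ℝ) * (1 + x / Real.sqrt k) := by
      rw [mul_add, mul_one, hA]; ring
    rw [harg, mul_pow, gfun, show -((k:ℝ) * (1 + x / Real.sqrt k))
        = -(k:ℝ) + -(Real.sqrt k * x) by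
      rw [mul_add, mul_one]; linear_combination -hA, Real.exp_add]
    ring
  simp only [h2] at h1
  rw [intervalIntegral.integral_const_mul] at h1
  have hIoc1 : ∫ x in (-(Real.sqrt k))..0, gfun k x = ∫ x in Ioc (-(Real.sqrt k)) 0, gfun k x :=
    intervalIntegral.integral_of_le (by linarith)
  have hIoc2 : ∫ u in (0:ℝ)..(k:ℝ), u ^ k * Real.exp (-u)
      = ∫ u in Ioc (0:ℝ) (k:ℝ), u ^ k * Real.exp (-u) :=
    intervalIntegral.integral_of_le (by exact_mod_cast Nat.cast_nonneg k)
  rw [hIoc1, hIoc2, smul_eq_mul] at h1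
  have hinv : Real.sqrt k * (Real.sqrt k)⁻¹ = 1 := mul_inv_cancel₀ hkpos.ne'
  linear_combination (-(Real.sqrt k)) * h1 -
    (∫ u in Ioc (0:ℝ) (k:ℝ), u ^ k * Real.exp (-u)) * hinv

lemma aux_gauss_value :
    ∫ x in Iic (0:ℝ), Real.exp (-(1/2) * x ^ 2) = Real.sqrt (2 * Real.pi) / 2 := by
  have h := integral_comp_neg_Iic (0:ℝ) (fun x : ℝ => Real.exp (-(1/2) * x ^ 2))
  simp only [neg_zero] at h
  have h2 : (fun x : ℝ => Real.exp (-(1/2) * (-x) ^ 2)) = fun x : ℝ => Real.exp (-(1/2) * x ^ 2) := by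
    funext x; rw [neg_sq]
  rw [show (∫ x in Iic (0:ℝ), Real.exp (-(1/2) * x ^ 2))
      = ∫ x in Iic (0:ℝ), Real.exp (-(1/2) * (-x) ^ 2) by
    congr 1; funext x; rw [neg_sq]]
  rw [h, integral_gaussian_Ioi]
  rw [show Real.pi / (1/2) = 2 * Real.pi by ring]

lemma aux_stirling :
    Tendsto (fun k : ℕ => Real.sqrt k * (k:ℝ) ^ k * Real.exp (-(k:ℝ)) / (k.factorial : ℝ))
      atTop (nhds (Real.sqrt (2 * Real.pi))⁻¹) := by
  have hpi : Real.sqrt Real.pi ≠ 0 := by positivity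
  have hlim : Tendsto (fun k : ℕ => (Real.sqrt 2 * Stirling.stirlingSeq k)⁻¹) atTop
      (nhds (Real.sqrt 2 * Real.sqrt Real.pi)⁻¹) := by
    refine (Tendsto.inv₀ ?_ ?_)
    · exact Stirling.tendsto_stirlingSeq_sqrt_pi.const_mul _
    · positivity
  rw [show Real.sqrt (2 * Real.pi) = Real.sqrt 2 * Real.sqrt Real.pi from
    Real.sqrt_mul (by norm_num) _]
  refine hlim.congr' ?_
  filter_upwards [eventually_ge_atTop 1] with k hk
  have hkpos : (0 : ℝ) < Real.sqrt k := Real.sqrt_pos.2 (by exact_mod_cast hk)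
  have hkR : (0:ℝ) < (k:ℝ) := by exact_mod_cast hk
  have hfac : (0:ℝ) < (k.factorial : ℝ) := by exact_mod_cast k.factorial_pos
  rw [Stirling.stirlingSeq]
  have hek : Real.exp 1 ^ k = Real.exp k := by
    rw [← Real.exp_nat_mul]; ring_nf
  have h2k : Real.sqrt (2 * k) = Real.sqrt 2 * Real.sqrt k :=
    Real.sqrt_mul (by norm_num) _
  rw [h2k, div_pow, hek]
  have hexpk : (0:ℝ) < Real.exp (k:ℝ) := Real.exp_pos _
  rw [Real.exp_neg]
  field_simp

lemma aux_main :
    Tendsto (fun k : ℕ =>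
        (1 / (k.factorial : ℝ)) * ∫ u in Ioc (0:ℝ) (k:ℝ), u ^ k * Real.exp (-u))
      atTop (nhds (1/2)) := by
  have hprod := aux_stirling.mul aux_Jneg_tendsto
  have hval : (Real.sqrt (2*Real.pi))⁻¹ * (∫ x in Iic (0:ℝ), Real.exp (-(1/2) * x^2)) = 1/2 := by
    rw [aux_gauss_value]
    have h0 : Real.sqrt (2*Real.pi) ≠ 0 := by positivity
    field_simp
  rw [hval] at hprod
  refine hprod.congr' ?_
  filter_upwards [eventually_ge_atTop 1] with k hk
  rw [aux_change hk]
  ring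

lemma aux_deriv_sum (k : ℕ) (x : ℝ) :
    HasDerivAt (fun y : ℝ => ∑ l ∈ Finset.range (k+1), y ^ l / (l.factorial : ℝ))
      (∑ l ∈ Finset.range k, x ^ l / (l.factorial : ℝ)) x := by
  have h : HasDerivAt (fun y : ℝ => ∑ l ∈ Finset.range (k+1), y ^ l / (l.factorial : ℝ))
      (∑ l ∈ Finset.range (k+1), (l : ℝ) * x ^ (l-1) / (l.factorial : ℝ)) x := by
    refine HasDerivAt.fun_sum fun l _ => ?_
    simpa [div_eq_mul_inv] using (hasDerivAt_pow l x).div_const (l.factorial : ℝ)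
  convert h using 1
  rw [Finset.sum_range_succ']
  simp only [Nat.cast_zero, zero_mul, Nat.factorial_zero, Nat.cast_one, zero_div, add_zero]
  refine Finset.sum_congr rfl fun l _ => ?_
  rw [Nat.factorial_succ, Nat.add_sub_cancel]
  have hfl : (l.factorial : ℝ) ≠ 0 := by exact_mod_cast l.factorial_pos.ne'
  push_cast
  field_simp

lemma aux_ftc (k : ℕ) :
    ∫ u in Ioc (0:ℝ) (k:ℝ), u ^ k * Real.exp (-u)
      = (k.factorial : ℝ) *
          (1 - Real.exp (-(k:ℝ)) * ∑ l ∈ Finset.range (k+1), (k:ℝ) ^ l / (l.factorial : ℝ)) := by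
  have hfac : (k.factorial : ℝ) ≠ 0 := by exact_mod_cast k.factorial_pos.ne'
  set F : ℝ → ℝ := fun x => -((k.factorial : ℝ) *
    (Real.exp (-x) * ∑ l ∈ Finset.range (k+1), x ^ l / (l.factorial : ℝ))) with hFdef
  have hderiv : ∀ x ∈ uIcc (0:ℝ) (k:ℝ), HasDerivAt F (x ^ k * Real.exp (-x)) x := by
    intro x _
    have h1 : HasDerivAt (fun y : ℝ => Real.exp (-y)) (-Real.exp (-x)) x := by
      simpa using (hasDerivAt_neg x).exp
    have h2 := aux_deriv_sum k x
    have h4 := ((h1.fun_mul h2).const_mul (k.factorial : ℝ)).fun_neg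
    refine h4.congr_deriv (Eq.symm ?_)
    have hsub : (k.factorial : ℝ) *
        ((∑ l ∈ Finset.range (k+1), x ^ l / (l.factorial : ℝ))
          - ∑ l ∈ Finset.range k, x ^ l / (l.factorial : ℝ)) = x ^ k := by
      rw [Finset.sum_range_succ]
      field_simp
      ring
    linear_combination (-(Real.exp (-x))) * hsub
  have hcont : IntervalIntegrable (fun u : ℝ => u ^ k * Real.exp (-u)) volume 0 k := by
    apply Continuous.intervalIntegrable
    fun_prop
  have hint := intervalIntegral.integral_eq_sub_of_hasDerivAt hderiv hcont
  rw [intervalIntegral.integral_of_le (Nat.cast_nonneg k)] at hint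
  rw [hint, hFdef]
  have hS0 : ∑ l ∈ Finset.range (k+1), (0:ℝ) ^ l / (l.factorial : ℝ) = 1 := by
    rw [Finset.sum_eq_single 0]
    · simp
    · intro l _ hl
      simp [zero_pow hl]
    · intro h
      exact absurd (Finset.mem_range.2 (Nat.succ_pos k)) h
  simp only [hS0, neg_zero, Real.exp_zero, one_mul, mul_one]
  ring

/-- Normalized incomplete gamma (Poisson median) asymptotics: for every `t > 0`,
`(1/k!) (k/t)^{k+1} ∫_0^t s^k e^{-(k/t)s} ds → 1/2`, and equivalently
`e^{-k} ∑_{l=0}^k k^l/l! → 1/2`. -/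
theorem poisson_median_asymptotics :
    (∀ t : ℝ, 0 < t →
      Tendsto (fun k : ℕ =>
          (1 / (Nat.factorial k : ℝ)) * ((k : ℝ) / t) ^ (k + 1) *
            ∫ s in Ioc (0 : ℝ) t, s ^ k * Real.exp (-(((k : ℝ) / t) * s)))
        atTop (nhds (1 / 2))) ∧
    Tendsto (fun k : ℕ =>
        Real.exp (-(k : ℝ)) * ∑ l ∈ Finset.range (k + 1), (k : ℝ) ^ l / (Nat.factorial l : ℝ))
      atTop (nhds (1 / 2)) := by
  constructor
  · intro t ht
    refine aux_main.congr' ?_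
    filter_upwards [eventually_ge_atTop 1] with k hk
    have hkR : (0:ℝ) < (k:ℝ) := by exact_mod_cast hk
    set c : ℝ := (k:ℝ) / t with hc
    have hcpos : 0 < c := div_pos hkR ht
    have h1 := intervalIntegral.integral_comp_mul_left
      (f := fun u : ℝ => u ^ k * Real.exp (-u)) (a := (0:ℝ)) (b := t) hcpos.ne'
    simp only [mul_zero] at h1
    have hct : c * t = (k:ℝ) := by
      rw [hc]; field_simp
    rw [hct] at h1
    have h2 : ∀ x : ℝ, (c * x) ^ k * Real.exp (-(c * x)) = c ^ k * (x ^ k * Real.exp (-(c * x))) := by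
      intro x; rw [mul_pow]; ring
    simp only [h2] at h1
    rw [intervalIntegral.integral_const_mul] at h1
    rw [intervalIntegral.integral_of_le ht.le,
      intervalIntegral.integral_of_le (Nat.cast_nonneg k), smul_eq_mul] at h1
    have hinv : c * c⁻¹ = 1 := mul_inv_cancel₀ hcpos.ne'
    linear_combination (-(1 / (k.factorial : ℝ)) * c) * h1
      - ((1 / (k.factorial : ℝ)) * (∫ u in Ioc (0:ℝ) (k:ℝ), u ^ k * Real.exp (-u))) * hinv
  · have h2 : Tendsto (fun k : ℕ =>
        1 - (1 / (k.factorial : ℝ)) * ∫ u in Ioc (0:ℝ) (k:ℝ), u ^ k * Real.exp (-u))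
        atTop (nhds (1 - 1/2)) := tendsto_const_nhds.sub aux_main
    rw [show (1:ℝ) - 1/2 = 1/2 by norm_num] at h2
    refine h2.congr fun k => ?_
    rw [aux_ftc k]
    have hfac : (k.factorial : ℝ) ≠ 0 := by exact_mod_cast k.factorial_pos.ne'
    field_simp
    ring
end

section
/- Let K be a nonempty compact metric space and let a : K → L^∞([0,∞); ℝ) be continuous when L^∞([0,∞)) carries the weak* topology, i.e., for every η ∈ L¹([0,∞)) the map x ↦ ∫_0^∞ η(t) a(x)(t) dt is continuous on K, and suppose sup_{x∈K} ‖a(x)‖_{L^∞} < ∞. Define a quasi-order on K by x ≼ y if and only if a(x)(t) ≤ a(y)(t) for almost every t ∈ [0,∞). Then K has a minimal element with respect to ≼: there exists m ∈ K such that for every y ∈ K, if y ≼ m then a(m)(t) ≤ a(y)(t) for almost every t ∈ [0,∞). -/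
open MeasureTheory Filter Set

/-- Minimal elements for the acceleration quasi-order: if `K` is a nonempty compact metric
space and `a : K → L^∞([0,∞))` is weak*-continuous and uniformly bounded, then the
quasi-order `x ≼ y ⟺ a(x) ≤ a(y)` a.e. on `[0,∞)` admits a minimal element. -/
theorem minimal_element_acceleration_order
    {K : Type*} [MetricSpace K] [CompactSpace K] [Nonempty K]
    (a : K → ℝ → ℝ)
    (hameas : ∀ x : K, Measurable (a x))
    (C : ℝ) (habdd : ∀ x : K, ∀ᵐ t ∂(volume.restrict (Ici (0 : ℝ))), |a x t| ≤ C)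
    (hacont : ∀ η : ℝ → ℝ, Integrable η (volume.restrict (Ici (0 : ℝ))) →
      Continuous (fun x : K => ∫ t in Ici (0 : ℝ), η t * a x t)) :
    ∃ m : K, ∀ y : K,
      (∀ᵐ t ∂(volume.restrict (Ici (0 : ℝ))), a y t ≤ a m t) →
      (∀ᵐ t ∂(volume.restrict (Ici (0 : ℝ))), a m t ≤ a y t) := by
  set μ := volume.restrict (Ici (0 : ℝ)) with hμ
  -- the weight e^{-t} is integrable on [0,∞)
  have hηint : Integrable (fun t : ℝ => Real.exp (-t)) μ := by
    have := exp_neg_integrableOn_Ioi (0 : ℝ) (one_pos)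
    rw [hμ, ← IntegrableOn, integrableOn_Ici_iff_integrableOn_Ioi]
    simpa using this
  -- integrability of e^{-t} * a x t
  have hint : ∀ x : K, Integrable (fun t => Real.exp (-t) * a x t) μ := by
    intro x
    refine Integrable.mono' (g := fun t => |C| * Real.exp (-t)) (hηint.const_mul _) ?_ ?_
    · exact ((Real.measurable_exp.comp measurable_neg).mul (hameas x)).aestronglyMeasurable
    · filter_upwards [habdd x] with t ht
      rw [Real.norm_eq_abs, abs_mul, abs_of_pos (Real.exp_pos _), mul_comm]
      exact mul_le_mul (ht.trans (le_abs_self C)) le_rfl (Real.exp_pos _).le (abs_nonneg _)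
  -- minimize the continuous functional x ↦ ∫ e^{-t} a x t
  obtain ⟨m, -, hm⟩ := isCompact_univ.exists_isMinOn univ_nonempty
    ((hacont _ hηint).continuousOn
      (s := (univ : Set K)) (f := fun x : K => ∫ t in Ici (0 : ℝ), Real.exp (-t) * a x t))
  refine ⟨m, fun y hy => ?_⟩
  have h1 : ∫ t, Real.exp (-t) * a m t ∂μ ≤ ∫ t, Real.exp (-t) * a y t ∂μ :=
    hm (mem_univ y)
  have h2 : ∫ t, Real.exp (-t) * a y t ∂μ ≤ ∫ t, Real.exp (-t) * a m t ∂μ := by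
    refine integral_mono_ae (hint y) (hint m) ?_
    filter_upwards [hy] with t ht
    exact mul_le_mul_of_nonneg_left ht (Real.exp_pos _).le
  have h0 : ∀ᵐ t ∂μ, 0 ≤ Real.exp (-t) * (a m t - a y t) := by
    filter_upwards [hy] with t ht
    exact mul_nonneg (Real.exp_pos _).le (by linarith)
  have hintd : Integrable (fun t => Real.exp (-t) * (a m t - a y t)) μ := by
    have := (hint m).sub (hint y)
    exact this.congr (Eventually.of_forall fun t => by simp [mul_sub])
  have hzero : (fun t => Real.exp (-t) * (a m t - a y t)) =ᵐ[μ] 0 := by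
    rw [← integral_eq_zero_iff_of_nonneg_ae h0 hintd]
    have : ∫ t, Real.exp (-t) * (a m t - a y t) ∂μ
        = (∫ t, Real.exp (-t) * a m t ∂μ) - ∫ t, Real.exp (-t) * a y t ∂μ := by
      rw [← integral_sub (hint m) (hint y)]; simp [mul_sub]
    rw [this]; linarith
  filter_upwards [hzero] with t ht
  have : a m t - a y t = 0 := by
    have h := ht
    simp only [Pi.zero_apply] at h
    rcases mul_eq_zero.1 h with h' | h'
    · exact absurd h' (Real.exp_ne_zero _)
    · exact h'
  linarith
end
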